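/- arXiv:2510.16569 — 5 statements merged into one kernel-verified Lean document; each statement's English description precedes it below -/
import Mathlib

section
/- Let n be a positive integer, let 0 ≤ μ < L < ∞ and set κ := μ/L, and let 0 ≤ α ≤ min{1, 2κ}. Let f₁, f₂ : ℝⁿ → ℝ both belong to F_{μ,L}(ℝⁿ), set f := f₁ − f₂, and suppose f is bounded below with f⋆ := inf_{x ∈ ℝⁿ} f(x) finite. Let N be a positive integer and let x¹, …, x^{N+1} and y¹, …, y^N in ℝⁿ and subgradients g₁ᵏ ∈ ∂f₁(xᵏ), g₂ᵏ ∈ ∂f₂(xᵏ) for k = 1, …, N+1 be generated by the boosted DCA: for each k = 1, …, N, the point yᵏ satisfies g₂ᵏ ∈ ∂f₁(yᵏ) (i.e., yᵏ minimizes x ↦ f₁(x) − (f₂(xᵏ) + ⟨g₂ᵏ, x − xᵏ⟩)), and x^{k+1} = yᵏ + α(yᵏ − xᵏ). Then min_{1 ≤ k ≤ N+1} ‖g₁ᵏ − g₂ᵏ‖²/L ≤ (f(x¹) − f⋆) / ((1 + κα)N + 1/(2(1 − κ))). -/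
set_option maxHeartbeats 4000000

/-- `g` is a subgradient of the (convex) function `f` at `x`. -/
def SubgradAt {n : ℕ} (f : EuclideanSpace ℝ (Fin n) → ℝ)
    (g x : EuclideanSpace ℝ (Fin n)) : Prop :=
  ∀ y, f x + (inner ℝ g (y - x) : ℝ) ≤ f y

/-- `f` belongs to the class `F_{μ,L}(ℝⁿ)`: minimum curvature `μ`, maximum curvature `L`. -/
def MemFClass {n : ℕ} (μ L : ℝ) (f : EuclideanSpace ℝ (Fin n) → ℝ) : Prop :=
  ConvexOn ℝ Set.univ (fun x => f x - μ / 2 * ‖x‖ ^ 2) ∧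
  ConvexOn ℝ Set.univ (fun x => L / 2 * ‖x‖ ^ 2 - f x)

open scoped RealInnerProductSpace

private lemma le_of_forall_t' {a b c : ℝ} (hc : 0 ≤ c)
    (h : ∀ t : ℝ, 0 < t → t ≤ 1 → a ≤ b + t * c) : a ≤ b := by
  by_contra hab
  push_neg at hab
  set t := min 1 ((a - b) / (2 * (c + 1))) with ht
  have htpos : 0 < t := lt_min one_pos (div_pos (by linarith) (by positivity))
  have ht1 : t ≤ 1 := min_le_left _ _
  have h2 : t ≤ (a - b) / (2 * (c + 1)) := min_le_right _ _
  have := h t htpos ht1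
  have htc : t * c ≤ (a - b) / 2 := by
    calc t * c ≤ ((a - b) / (2 * (c + 1))) * c := by
          apply mul_le_mul_of_nonneg_right h2 hc
      _ ≤ (a - b) / 2 := by
          rw [div_mul_eq_mul_div, div_le_div_iff₀ (by positivity) (by norm_num)]
          nlinarith
  linarith

section Core
variable {E : Type*} [NormedAddCommGroup E] [InnerProductSpace ℝ E]

private lemma lower_bound' (f : E → ℝ) (μ : ℝ) (hμ : 0 ≤ μ)
    (hconv : ConvexOn ℝ Set.univ (fun w => f w - μ / 2 * ‖w‖ ^ 2))
    (g x : E) (hg : ∀ y, f x + ⟪g, y - x⟫ ≤ f y) (z : E) :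
    f x + ⟪g, z - x⟫ + μ / 2 * ‖z - x‖ ^ 2 ≤ f z := by
  have hX : (0:ℝ) ≤ μ / 2 * ‖z - x‖ ^ 2 := by positivity
  apply le_of_forall_t' hX
  intro t htp ht1
  have hcomb : (1 - t) • x + t • z = x + t • (z - x) := by module
  have hcv := hconv.2 (Set.mem_univ x) (Set.mem_univ z)
    (by linarith : (0:ℝ) ≤ 1 - t) (le_of_lt htp) (by ring)
  rw [hcomb] at hcv
  simp only [smul_eq_mul] at hcv
  have hsub := hg (x + t • (z - x))
  have e1 : x + t • (z - x) - x = t • (z - x) := by module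
  rw [e1, real_inner_smul_right] at hsub
  have e2 : ‖x + t • (z - x)‖ ^ 2 = ‖x‖ ^ 2 + 2 * (t * ⟪x, z - x⟫) + t ^ 2 * ‖z - x‖ ^ 2 := by
    rw [norm_add_sq_real, real_inner_smul_right, norm_smul]
    rw [mul_pow, Real.norm_eq_abs, sq_abs]
  have e3 : ‖z‖ ^ 2 = ‖x‖ ^ 2 + 2 * ⟪x, z - x⟫ + ‖z - x‖ ^ 2 := by
    rw [show z = x + (z - x) by abel, norm_add_sq_real]
    abel_nf
  rw [e2, e3] at hcv
  have goal' : t * (f x + ⟪g, z - x⟫ + μ / 2 * ‖z - x‖ ^ 2)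
      ≤ t * (f z + t * (μ / 2 * ‖z - x‖ ^ 2)) := by nlinarith [hcv, hsub]
  exact (mul_le_mul_iff_right₀ htp).mp goal'

private lemma upper_bound' (f : E → ℝ) (L : ℝ) (hL : 0 ≤ L)
    (hconv : ConvexOn ℝ Set.univ (fun w => L / 2 * ‖w‖ ^ 2 - f w))
    (g x : E) (hg : ∀ y, f x + ⟪g, y - x⟫ ≤ f y) (z : E) :
    f z ≤ f x + ⟪g, z - x⟫ + L / 2 * ‖z - x‖ ^ 2 := by
  have hX : (0:ℝ) ≤ L / 2 * ‖z - x‖ ^ 2 := by positivity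
  apply le_of_forall_t' hX
  intro t htp ht1
  have hmid' : (1/2 : ℝ) • (x + t • (z - x)) + (1/2 : ℝ) • (x - t • (z - x)) = x := by module
  have hmid := hconv.2 (Set.mem_univ (x + t • (z - x))) (Set.mem_univ (x - t • (z - x)))
    (by norm_num : (0:ℝ) ≤ 1/2) (by norm_num : (0:ℝ) ≤ 1/2) (by norm_num)
  rw [hmid'] at hmid
  simp only [smul_eq_mul] at hmid
  have hcomb : (1 - t) • x + t • z = x + t • (z - x) := by module
  have hcv := hconv.2 (Set.mem_univ x) (Set.mem_univ z)
    (by linarith : (0:ℝ) ≤ 1 - t) (le_of_lt htp) (by ring)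
  rw [hcomb] at hcv
  simp only [smul_eq_mul] at hcv
  have hsub := hg (x - t • (z - x))
  have e1 : x - t • (z - x) - x = (-t) • (z - x) := by module
  rw [e1, real_inner_smul_right] at hsub
  have e2 : ‖x + t • (z - x)‖ ^ 2 = ‖x‖ ^ 2 + 2 * (t * ⟪x, z - x⟫) + t ^ 2 * ‖z - x‖ ^ 2 := by
    rw [norm_add_sq_real, real_inner_smul_right, norm_smul]
    rw [mul_pow, Real.norm_eq_abs, sq_abs]
  have e2' : ‖x - t • (z - x)‖ ^ 2 = ‖x‖ ^ 2 - 2 * (t * ⟪x, z - x⟫) + t ^ 2 * ‖z - x‖ ^ 2 := by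
    rw [norm_sub_sq_real, real_inner_smul_right, norm_smul]
    rw [mul_pow, Real.norm_eq_abs, sq_abs]
  have e3 : ‖z‖ ^ 2 = ‖x‖ ^ 2 + 2 * ⟪x, z - x⟫ + ‖z - x‖ ^ 2 := by
    rw [show z = x + (z - x) by abel, norm_add_sq_real]
    abel_nf
  rw [e2, e2'] at hmid
  rw [e2, e3] at hcv
  have goal' : t * (f z) ≤ t * (f x + ⟪g, z - x⟫ + L / 2 * ‖z - x‖ ^ 2
      + t * (L / 2 * ‖z - x‖ ^ 2)) := by nlinarith [hmid, hcv, hsub]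
  exact (mul_le_mul_iff_right₀ htp).mp goal'

private lemma interp' (f : E → ℝ) (μ L : ℝ) (hμ : 0 ≤ μ) (hμL : μ < L)
    (hc1 : ConvexOn ℝ Set.univ (fun w => f w - μ / 2 * ‖w‖ ^ 2))
    (hc2 : ConvexOn ℝ Set.univ (fun w => L / 2 * ‖w‖ ^ 2 - f w))
    (gu u gv v : E) (hgu : ∀ y, f u + ⟪gu, y - u⟫ ≤ f y)
    (hgv : ∀ y, f v + ⟪gv, y - v⟫ ≤ f y) :
    ‖gu - gv - μ • (u - v)‖ ^ 2
      ≤ 2 * (L - μ) * (f u - f v - ⟪gv, u - v⟫ - μ / 2 * ‖u - v‖ ^ 2) := by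
  set c : ℝ := (L - μ)⁻¹ with hcdef
  have hLμ : (0:ℝ) < L - μ := sub_pos.mpr hμL
  have hc : (L - μ) * c = 1 := mul_inv_cancel₀ (ne_of_gt hLμ)
  set h : E := gu - gv - μ • (u - v) with hhdef
  set w : E := u - c • h with hwdef
  have I1 := lower_bound' f μ hμ hc1 gv v hgv w
  have I2 := upper_bound' f L (by linarith) hc2 gu u hgu w
  have e1 : w - u = (-c) • h := by rw [hwdef]; module
  have e2 : w - v = (u - v) - c • h := by rw [hwdef]; abel
  rw [e1, real_inner_smul_right] at I2
  rw [e2] at I1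
  rw [inner_sub_right, real_inner_smul_right] at I1
  have e3 : ‖(-c) • h‖ ^ 2 = c ^ 2 * ‖h‖ ^ 2 := by
    rw [norm_smul, mul_pow, Real.norm_eq_abs, sq_abs]; ring
  rw [e3] at I2
  have e4 : ‖u - v - c • h‖ ^ 2 = ‖u - v‖ ^ 2 - 2 * (c * ⟪u - v, h⟫) + c ^ 2 * ‖h‖ ^ 2 := by
    rw [norm_sub_sq_real, real_inner_smul_right, norm_smul, mul_pow, Real.norm_eq_abs, sq_abs]
  rw [e4] at I1
  have hkey : ⟪gu, h⟫ - ⟪gv, h⟫ - μ * ⟪u - v, h⟫ = ‖h‖ ^ 2 := by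
    rw [← real_inner_self_eq_norm_sq]
    nth_rewrite 4 [hhdef]
    rw [inner_sub_left, inner_sub_left, real_inner_smul_left]
    simp [inner_sub_left]
  have h3 : (L - μ) * (c * ‖h‖ ^ 2) = ‖h‖ ^ 2 := by linear_combination ‖h‖ ^ 2 * hc
  have h4 : (L - μ) * ((L - μ) * (c * (c * ‖h‖ ^ 2))) = ‖h‖ ^ 2 := by
    linear_combination ((L - μ) * c + 1) * ‖h‖ ^ 2 * hc
  have main : c * ‖h‖ ^ 2 - (L - μ) / 2 * (c * (c * ‖h‖ ^ 2))
      ≤ f u - f v - ⟪gv, u - v⟫ - μ / 2 * ‖u - v‖ ^ 2 := by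
    have hkeyc : c * ⟪gu, h⟫ - c * ⟪gv, h⟫ - c * (μ * ⟪u - v, h⟫) = c * ‖h‖ ^ 2 := by
      linear_combination c * hkey
    nlinarith [I1, I2, hkeyc]
  have main2 := mul_le_mul_of_nonneg_left main (by linarith : (0:ℝ) ≤ 2 * (L - μ))
  nlinarith [main2, h3, h4]

private lemma final_step' (f₁ f₂ : E → ℝ) (μ L : ℝ) (hμ0 : 0 ≤ μ) (hμL : μ < L)
    (hf₁b : ConvexOn ℝ Set.univ (fun w => L / 2 * ‖w‖ ^ 2 - f₁ w))
    (hf₂a : ConvexOn ℝ Set.univ (fun w => f₂ w - μ / 2 * ‖w‖ ^ 2))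
    (x g1 g2 : E) (hg1 : ∀ z, f₁ x + ⟪g1, z - x⟫ ≤ f₁ z)
    (hg2 : ∀ z, f₂ x + ⟪g2, z - x⟫ ≤ f₂ z) :
    ‖g1 - g2‖ ^ 2 ≤ 2 * (L - μ) * ((f₁ x - f₂ x)
      - (f₁ (x - ((L - μ)⁻¹) • (g1 - g2)) - f₂ (x - ((L - μ)⁻¹) • (g1 - g2)))) := by
  have hLμ : (0:ℝ) < L - μ := sub_pos.mpr hμL
  set c : ℝ := (L - μ)⁻¹ with hcdef
  have hc : (L - μ) * c = 1 := mul_inv_cancel₀ (ne_of_gt hLμ)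
  set w : E := x - c • (g1 - g2) with hwdef
  have I2 := upper_bound' f₁ L (by linarith) hf₁b g1 x hg1 w
  have I1 := lower_bound' f₂ μ hμ0 hf₂a g2 x hg2 w
  have e1 : w - x = (-c) • (g1 - g2) := by rw [hwdef]; module
  rw [e1, real_inner_smul_right] at I1 I2
  have e3 : ‖(-c) • (g1 - g2)‖ ^ 2 = c ^ 2 * ‖g1 - g2‖ ^ 2 := by
    rw [norm_smul, mul_pow, Real.norm_eq_abs, sq_abs]; ring
  rw [e3] at I1 I2
  have hkey : ⟪g1, g1 - g2⟫ - ⟪g2, g1 - g2⟫ = ‖g1 - g2‖ ^ 2 := by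
    rw [← real_inner_self_eq_norm_sq, ← inner_sub_left]
  have h3 : (L - μ) * (c * ‖g1 - g2‖ ^ 2) = ‖g1 - g2‖ ^ 2 := by
    linear_combination ‖g1 - g2‖ ^ 2 * hc
  have h4 : (L - μ) * ((L - μ) * (c * (c * ‖g1 - g2‖ ^ 2))) = ‖g1 - g2‖ ^ 2 := by
    linear_combination ((L - μ) * c + 1) * ‖g1 - g2‖ ^ 2 * hc
  have main : c * ‖g1 - g2‖ ^ 2 - (L - μ) / 2 * (c * (c * ‖g1 - g2‖ ^ 2))
      ≤ (f₁ x - f₂ x) - (f₁ w - f₂ w) := by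
    have hkeyc : c * ⟪g1, g1 - g2⟫ - c * ⟪g2, g1 - g2⟫ = c * ‖g1 - g2‖ ^ 2 := by
      linear_combination c * hkey
    nlinarith [I1, I2, hkeyc]
  have main2 := mul_le_mul_of_nonneg_left main (by linarith : (0:ℝ) ≤ 2 * (L - μ))
  nlinarith [main2, h3, h4]

private lemma nsq4 (a b c e : E) (p q r s : ℝ) :
    ‖p•a + q•b + r•c + s•e‖^2 =
      p^2*‖a‖^2 + q^2*‖b‖^2 + r^2*‖c‖^2 + s^2*‖e‖^2
      + 2*p*q*⟪a,b⟫ + 2*p*r*⟪a,c⟫ + 2*p*s*⟪a,e⟫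
      + 2*q*r*⟪b,c⟫ + 2*q*s*⟪b,e⟫ + 2*r*s*⟪c,e⟫ := by
  rw [← real_inner_self_eq_norm_sq, ← real_inner_self_eq_norm_sq,
    ← real_inner_self_eq_norm_sq, ← real_inner_self_eq_norm_sq,
    ← real_inner_self_eq_norm_sq]
  simp only [inner_add_left, inner_add_right, real_inner_smul_left, real_inner_smul_right]
  rw [real_inner_comm b a, real_inner_comm c a, real_inner_comm e a,
    real_inner_comm c b, real_inner_comm e b, real_inner_comm e c]
  ring

private lemma nsq4_nonneg (a b c e : E) (p q r s : ℝ) :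
    (0:ℝ) ≤ p^2*‖a‖^2 + q^2*‖b‖^2 + r^2*‖c‖^2 + s^2*‖e‖^2
      + 2*p*q*⟪a,b⟫ + 2*p*r*⟪a,c⟫ + 2*p*s*⟪a,e⟫
      + 2*q*r*⟪b,c⟫ + 2*q*s*⟪b,e⟫ + 2*r*s*⟪c,e⟫ := by
  rw [← nsq4]; positivity

private lemma nsq_smul (r : ℝ) (v : E) : ‖r • v‖^2 = r^2 * ‖v‖^2 := by
  rw [norm_smul, mul_pow, Real.norm_eq_abs, sq_abs]

end Core

lemma cert_pos0 (μ L dd aa b11 b22 dA dB1 dB2 AB1 AB2 B12 c2 F1X F1Y F2X F2Y : ℝ)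
    (hμ0 : 0 ≤ μ) (hμL : μ < L)
    (hE1 : aa + 2*μ*dA + μ^2*dd ≤ 2*(L-μ)*(F1X - F1Y + c2 - μ/2*dd))
    (hE7 : b22 - 2*μ*dB2 + μ^2*dd ≤ 2*(L-μ)*(F2Y - F2X - c2 - μ/2*dd))
    (hSa : 0 ≤ (0)^2*dd + (1)^2*aa + (0)^2*b11 + (1)^2*b22 + 2*(0)*(1)*dA + 2*(0)*(0)*dB1 + 2*(0)*(1)*dB2 + 2*(1)*(0)*AB1 + 2*(1)*(1)*AB2 + 2*(0)*(1)*B12)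
    (hSb : 0 ≤ (2*L)^2*dd + (1)^2*aa + (0)^2*b11 + (-1)^2*b22 + 2*(2*L)*(1)*dA + 2*(2*L)*(0)*dB1 + 2*(2*L)*(-1)*dB2 + 2*(1)*(0)*AB1 + 2*(1)*(-1)*AB2 + 2*(0)*(-1)*B12) :
    L*aa + L*b22 ≤ 2*L^2*((F1X - F2X) - (F1Y - F2Y)) := by
  have hL : 0 < L := lt_of_le_of_lt hμ0 hμL
  have hρ : (0:ℝ) < 2*(L-μ) := by linarith
  have n1 := mul_nonneg (by nlinarith : (0:ℝ) ≤ 2*L^2) (sub_nonneg.mpr hE1)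
  have n2 := mul_nonneg (by nlinarith : (0:ℝ) ≤ 2*L^2) (sub_nonneg.mpr hE7)
  have n3 := mul_nonneg (mul_nonneg hμ0 hL.le) hSa
  have n4 := mul_nonneg (mul_nonneg hμ0 hL.le) hSb
  have SUM := add_nonneg (add_nonneg (add_nonneg n1 n2) n3) n4
  have hEQ : (2*(L-μ)) * (2*L^2*((F1X - F2X) - (F1Y - F2Y)) - (L*aa + L*b22))
      = 2*L^2 * (2*(L-μ)*(F1X - F1Y + c2 - μ/2*dd) - (aa + 2*μ*dA + μ^2*dd))
      + 2*L^2 * (2*(L-μ)*(F2Y - F2X - c2 - μ/2*dd) - (b22 - 2*μ*dB2 + μ^2*dd))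
      + μ*L * ((0)^2*dd + (1)^2*aa + (0)^2*b11 + (1)^2*b22 + 2*(0)*(1)*dA + 2*(0)*(0)*dB1 + 2*(0)*(1)*dB2 + 2*(1)*(0)*AB1 + 2*(1)*(1)*AB2 + 2*(0)*(1)*B12)
      + μ*L * ((2*L)^2*dd + (1)^2*aa + (0)^2*b11 + (-1)^2*b22 + 2*(2*L)*(1)*dA + 2*(2*L)*(0)*dB1 + 2*(2*L)*(-1)*dB2 + 2*(1)*(0)*AB1 + 2*(1)*(-1)*AB2 + 2*(0)*(-1)*B12) := by ring
  have hKD : 0 ≤ (2*(L-μ)) * (2*L^2*((F1X - F2X) - (F1Y - F2Y)) - (L*aa + L*b22)) := by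
    rw [hEQ]; exact SUM
  have hD := (mul_nonneg_iff_of_pos_left hρ).mp hKD
  linarith [hD]

lemma cert_pos (μ L α dd aa b11 b22 dA dB1 dB2 AB1 AB2 B12 c2 F1X F1Y F1P F2X F2P : ℝ)
    (hμ0 : 0 ≤ μ) (hμL : μ < L) (hαp : 0 < α) (hα1 : α ≤ 1) (hα2 : α * L ≤ 2 * μ)
    (hE1 : aa + 2*μ*dA + μ^2*dd ≤ 2*(L-μ)*(F1X - F1Y + c2 - μ/2*dd))
    (hE2 : aa + 2*μ*dA + μ^2*dd ≤ 2*(L-μ)*(F1Y - F1X - (c2 + dA) - μ/2*dd))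
    (hE3 : b11 - 2*μ*α*dB1 + μ^2*α^2*dd ≤ 2*(L-μ)*(F1P - F1Y - α*c2 - μ/2*(α^2*dd)))
    (hE4 : b11 - 2*μ*α*dB1 + μ^2*α^2*dd ≤ 2*(L-μ)*(F1Y - F1P + α*(c2 + dB1) - μ/2*(α^2*dd)))
    (hE7 : b22 - 2*μ*(1+α)*dB2 + μ^2*(1+α)^2*dd ≤ 2*(L-μ)*(F2P - F2X - (1+α)*c2 - μ/2*((1+α)^2*dd)))
    (hS0 : 0 ≤ (2*μ*(L+2*α*(L+μ))*L)^2*dd + (μ*(L+2*α*(L+μ)))^2*aa + (-(L*(L+μ-μ*α)))^2*b11 + (-(μ*L*(1+α)))^2*b22 + 2*(2*μ*(L+2*α*(L+μ))*L)*(μ*(L+2*α*(L+μ)))*dA + 2*(2*μ*(L+2*α*(L+μ))*L)*(-(L*(L+μ-μ*α)))*dB1 + 2*(2*μ*(L+2*α*(L+μ))*L)*(-(μ*L*(1+α)))*dB2 + 2*(μ*(L+2*α*(L+μ)))*(-(L*(L+μ-μ*α)))*AB1 + 2*(μ*(L+2*α*(L+μ)))*(-(μ*L*(1+α)))*AB2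 + 2*(-(L*(L+μ-μ*α)))*(-(μ*L*(1+α)))*B12)
    (hS1 : 0 ≤ (0)^2*dd + (μ*(L+2*α*(L+μ)))^2*aa + (L*(L+μ-μ*α))^2*b11 + (μ*L*(1+α))^2*b22 + 2*(0)*(μ*(L+2*α*(L+μ)))*dA + 2*(0)*(L*(L+μ-μ*α))*dB1 + 2*(0)*(μ*L*(1+α))*dB2 + 2*(μ*(L+2*α*(L+μ)))*(L*(L+μ-μ*α))*AB1 + 2*(μ*(L+2*α*(L+μ)))*(μ*L*(1+α))*AB2 + 2*(L*(L+μ-μ*α))*(μ*L*(1+α))*B12)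
    (hSV : 0 ≤ (0)^2*dd + (0)^2*aa + (L+μ*α)^2*b11 + (-(α*μ))^2*b22 + 2*(0)*(0)*dA + 2*(0)*(L+μ*α)*dB1 + 2*(0)*(-(α*μ))*dB2 + 2*(0)*(L+μ*α)*AB1 + 2*(0)*(-(α*μ))*AB2 + 2*(L+μ*α)*(-(α*μ))*B12) :
    (L + 2*μ*α)*aa + L*(b11 - 2*B12 + b22) ≤ 2*L^2*((F1X - F2X) - (F1P - F2P)) := by
  have hL : 0 < L := lt_of_le_of_lt hμ0 hμL
  have hμp : 0 < μ := by nlinarith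
  have hq : (0:ℝ) < L + 2*α*(L+μ) := by nlinarith
  have c1n : (0:ℝ) ≤ 2*α*μ*(L+2*α*(L+μ))*L*(L+2*μ*α) :=
    mul_nonneg (mul_nonneg (mul_nonneg (mul_nonneg
      (mul_nonneg (by norm_num) hαp.le) hμ0) hq.le) hL.le) (by nlinarith)
  have c2n : (0:ℝ) ≤ 4*α^2*μ^2*(L+2*α*(L+μ))*L :=
    mul_nonneg (mul_nonneg (by positivity) hq.le) hL.le
  have c3n : (0:ℝ) ≤ 2*μ*(L+2*α*(L+μ))*L^2*(1-α) :=
    mul_nonneg (mul_nonneg (mul_nonneg (mul_nonneg (by norm_num) hμ0) hq.le)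
      (sq_nonneg L)) (by linarith)
  have c4n : (0:ℝ) ≤ 2*μ*(L+2*α*(L+μ))*L^2 :=
    mul_nonneg (mul_nonneg (mul_nonneg (by norm_num) hμ0) hq.le) (sq_nonneg L)
  have c7n : (0:ℝ) ≤ 2*α*μ*(L+2*α*(L+μ))*L^2 :=
    mul_nonneg (mul_nonneg (mul_nonneg (mul_nonneg (by norm_num) hαp.le) hμ0) hq.le) (sq_nonneg L)
  have cvn : (0:ℝ) ≤ 2*L*(2*μ-α*L) :=
    mul_nonneg (mul_nonneg (by norm_num) hL.le) (by nlinarith)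
  have n1e := mul_nonneg c1n (sub_nonneg.mpr hE1)
  have n2e := mul_nonneg c2n (sub_nonneg.mpr hE2)
  have n3e := mul_nonneg c3n (sub_nonneg.mpr hE3)
  have n4e := mul_nonneg c4n (sub_nonneg.mpr hE4)
  have n7e := mul_nonneg c7n (sub_nonneg.mpr hE7)
  have n5e := mul_nonneg hαp.le hS0
  have n6e := mul_nonneg hαp.le hS1
  have n8e := mul_nonneg cvn hSV
  have SUM := add_nonneg (add_nonneg (add_nonneg (add_nonneg (add_nonneg (add_nonneg
    (add_nonneg n1e n2e) n3e) n4e) n7e) n5e) n6e) n8e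
  have hEQ : (α*μ*(L + 2*α*(L+μ))*(2*(L-μ))) *
      (2*L^2*((F1X - F2X) - (F1P - F2P)) - ((L + 2*μ*α)*aa + L*(b11 - 2*B12 + b22)))
      = 2*α*μ*(L+2*α*(L+μ))*L*(L+2*μ*α) * (2*(L-μ)*(F1X - F1Y + c2 - μ/2*dd) - (aa + 2*μ*dA + μ^2*dd))
      + 4*α^2*μ^2*(L+2*α*(L+μ))*L * (2*(L-μ)*(F1Y - F1X - (c2 + dA) - μ/2*dd) - (aa + 2*μ*dA + μ^2*dd))
      + 2*μ*(L+2*α*(L+μ))*L^2*(1-α) * (2*(L-μ)*(F1P - F1Y - α*c2 - μ/2*(α^2*dd)) - (b11 - 2*μ*α*dB1 + μ^2*α^2*dd))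
      + 2*μ*(L+2*α*(L+μ))*L^2 * (2*(L-μ)*(F1Y - F1P + α*(c2 + dB1) - μ/2*(α^2*dd)) - (b11 - 2*μ*α*dB1 + μ^2*α^2*dd))
      + 2*α*μ*(L+2*α*(L+μ))*L^2 * (2*(L-μ)*(F2P - F2X - (1+α)*c2 - μ/2*((1+α)^2*dd)) - (b22 - 2*μ*(1+α)*dB2 + μ^2*(1+α)^2*dd))
      + α * ((2*μ*(L+2*α*(L+μ))*L)^2*dd + (μ*(L+2*α*(L+μ)))^2*aa + (-(L*(L+μ-μ*α)))^2*b11 + (-(μ*L*(1+α)))^2*b22 + 2*(2*μ*(L+2*α*(L+μ))*L)*(μ*(L+2*α*(L+μ)))*dA + 2*(2*μ*(L+2*α*(L+μ))*L)*(-(L*(L+μ-μ*α)))*dB1 + 2*(2*μ*(L+2*α*(L+μ))*L)*(-(μ*L*(1+α)))*dB2 + 2*(μ*(L+2*α*(L+μ)))*(-(L*(L+μ-μ*α)))*AB1 + 2*(μ*(L+2*α*(L+μ)))*(-(μ*L*(1+α)))*AB2 + 2*(-(L*(L+μ-μ*α)))*(-(μ*L*(1+α)))*B12)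
      + α * ((0)^2*dd + (μ*(L+2*α*(L+μ)))^2*aa + (L*(L+μ-μ*α))^2*b11 + (μ*L*(1+α))^2*b22 + 2*(0)*(μ*(L+2*α*(L+μ)))*dA + 2*(0)*(L*(L+μ-μ*α))*dB1 + 2*(0)*(μ*L*(1+α))*dB2 + 2*(μ*(L+2*α*(L+μ)))*(L*(L+μ-μ*α))*AB1 + 2*(μ*(L+2*α*(L+μ)))*(μ*L*(1+α))*AB2 + 2*(L*(L+μ-μ*α))*(μ*L*(1+α))*B12)
      + 2*L*(2*μ-α*L) * ((0)^2*dd + (0)^2*aa + (L+μ*α)^2*b11 + (-(α*μ))^2*b22 + 2*(0)*(0)*dA + 2*(0)*(L+μ*α)*dB1 + 2*(0)*(-(α*μ))*dB2 + 2*(0)*(L+μ*α)*AB1 + 2*(0)*(-(α*μ))*AB2 + 2*(L+μ*α)*(-(α*μ))*B12) := by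
    ring
  have hKD : 0 ≤ (α*μ*(L + 2*α*(L+μ))*(2*(L-μ))) *
      (2*L^2*((F1X - F2X) - (F1P - F2P)) - ((L + 2*μ*α)*aa + L*(b11 - 2*B12 + b22))) := by
    rw [hEQ]; exact SUM
  have hKpos : (0:ℝ) < α*μ*(L + 2*α*(L+μ))*(2*(L-μ)) := by
    have h' : (0:ℝ) < L - μ := sub_pos.mpr hμL
    positivity
  have hD := (mul_nonneg_iff_of_pos_left hKpos).mp hKD
  linarith [hD]

section Key
variable {E : Type*} [NormedAddCommGroup E] [InnerProductSpace ℝ E]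

private lemma key_step (f₁ f₂ : E → ℝ) (μ L α : ℝ) (hμ0 : 0 ≤ μ) (hμL : μ < L)
    (hα0 : 0 ≤ α) (hα1 : α ≤ 1) (hα2 : α * L ≤ 2 * μ)
    (hf₁a : ConvexOn ℝ Set.univ (fun w => f₁ w - μ / 2 * ‖w‖ ^ 2))
    (hf₁b : ConvexOn ℝ Set.univ (fun w => L / 2 * ‖w‖ ^ 2 - f₁ w))
    (hf₂a : ConvexOn ℝ Set.univ (fun w => f₂ w - μ / 2 * ‖w‖ ^ 2))
    (hf₂b : ConvexOn ℝ Set.univ (fun w => L / 2 * ‖w‖ ^ 2 - f₂ w))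
    (x y xp g1 g2 G1 G2 : E)
    (hg1 : ∀ z, f₁ x + ⟪g1, z - x⟫ ≤ f₁ z)
    (hg2 : ∀ z, f₂ x + ⟪g2, z - x⟫ ≤ f₂ z)
    (hyg : ∀ z, f₁ y + ⟪g2, z - y⟫ ≤ f₁ z)
    (hG1 : ∀ z, f₁ xp + ⟪G1, z - xp⟫ ≤ f₁ z)
    (hG2 : ∀ z, f₂ xp + ⟪G2, z - xp⟫ ≤ f₂ z)
    (hstep : xp = y + α • (y - x)) :
    (L + 2*μ*α) * ‖g1 - g2‖^2 + L * ‖G1 - G2‖^2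
      ≤ 2*L^2 * ((f₁ x - f₂ x) - (f₁ xp - f₂ xp)) := by
  have hL : 0 < L := lt_of_le_of_lt hμ0 hμL
  have h1 := interp' f₁ μ L hμ0 hμL hf₁a hf₁b g1 x g2 y hg1 hyg
  rw [show g1 - g2 - μ • (x - y)
      = μ•(y-x) + (1:ℝ)•(g1-g2) + (0:ℝ)•(G1-g2) + (0:ℝ)•(G2-g2) from by module,
    nsq4] at h1
  rw [show x - y = (-1:ℝ)•(y-x) from by module] at h1
  rw [real_inner_smul_right, nsq_smul] at h1
  have hE1 : ‖g1-g2‖^2 + 2*μ*⟪y-x,g1-g2⟫ + μ^2*‖y-x‖^2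
      ≤ 2*(L-μ)*(f₁ x - f₁ y + ⟪g2,y-x⟫ - μ/2*‖y-x‖^2) := by linarith [h1]
  rcases eq_or_lt_of_le hα0 with hαz | hαp
  · -- α = 0
    have hα : α = 0 := hαz.symm
    subst hα
    have hxpy : xp = y := by rw [hstep]; simp
    subst hxpy
    have hGI := interp' f₁ μ L hμ0 hμL hf₁a hf₁b G1 xp g2 xp hG1 hyg
    simp only [sub_self, smul_zero, sub_zero, inner_zero_right, norm_zero] at hGI
    have hGg : G1 = g2 := by
      have hn0 : ‖G1 - g2‖ ^ 2 = 0 := le_antisymm (by nlinarith [hGI]) (by positivity)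
      have := (pow_eq_zero_iff two_ne_zero).mp hn0
      exact sub_eq_zero.mp (norm_eq_zero.mp this)
    have h7 := interp' f₂ μ L hμ0 hμL hf₂a hf₂b G2 xp g2 x hG2 hg2
    rw [show G2 - g2 - μ • (xp - x)
        = (-μ)•(xp-x) + (0:ℝ)•(g1-g2) + (0:ℝ)•(G1-g2) + (1:ℝ)•(G2-g2) from by module,
      nsq4] at h7
    have hE7 : ‖G2-g2‖^2 - 2*μ*⟪xp-x,G2-g2⟫ + μ^2*‖xp-x‖^2
        ≤ 2*(L-μ)*(f₂ xp - f₂ x - ⟪g2,xp-x⟫ - μ/2*‖xp-x‖^2) := by linarith [h7]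
    have hSa := nsq4_nonneg (xp-x) (g1-g2) (G1-g2) (G2-g2) (0:ℝ) (1:ℝ) (0:ℝ) (1:ℝ)
    have hSb := nsq4_nonneg (xp-x) (g1-g2) (G1-g2) (G2-g2) (2*L) (1:ℝ) (0:ℝ) (-1:ℝ)
    have hcert := cert_pos0 μ L (‖xp-x‖^2) (‖g1-g2‖^2) (‖G1-g2‖^2) (‖G2-g2‖^2)
      (⟪xp-x,g1-g2⟫) (⟪xp-x,G1-g2⟫) (⟪xp-x,G2-g2⟫) (⟪g1-g2,G1-g2⟫) (⟪g1-g2,G2-g2⟫)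
      (⟪G1-g2,G2-g2⟫) (⟪g2,xp-x⟫) (f₁ x) (f₁ xp) (f₂ x) (f₂ xp)
      hμ0 hμL (by linarith [hE1]) hE7 hSa hSb
    have hGG : ‖G1 - G2‖^2 = ‖G2 - g2‖^2 := by rw [hGg, norm_sub_rev]
    rw [hGG]
    linarith [hcert]
  · -- α > 0
    have h2 := interp' f₁ μ L hμ0 hμL hf₁a hf₁b g2 y g1 x hyg hg1
    rw [show g2 - g1 - μ • (y - x)
        = (-μ)•(y-x) + (-1:ℝ)•(g1-g2) + (0:ℝ)•(G1-g2) + (0:ℝ)•(G2-g2) from by module,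
      nsq4] at h2
    rw [show (inner ℝ g1 (y-x) : ℝ) = ⟪g2, y-x⟫ + ⟪y-x, g1-g2⟫ from by
      rw [← real_inner_comm (y-x) (g1-g2), ← inner_add_left,
        show g2 + (g1-g2) = g1 by abel]] at h2
    have hE2 : ‖g1-g2‖^2 + 2*μ*⟪y-x,g1-g2⟫ + μ^2*‖y-x‖^2
        ≤ 2*(L-μ)*(f₁ y - f₁ x - (⟪g2,y-x⟫ + ⟪y-x,g1-g2⟫) - μ/2*‖y-x‖^2) := by
      linarith [h2]
    have h3 := interp' f₁ μ L hμ0 hμL hf₁a hf₁b G1 xp g2 y hG1 hyg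
    rw [show xp - y = α•(y-x) from by rw [hstep]; module] at h3
    rw [show G1 - g2 - μ • (α•(y-x))
        = (-(μ*α))•(y-x) + (0:ℝ)•(g1-g2) + (1:ℝ)•(G1-g2) + (0:ℝ)•(G2-g2) from by module,
      nsq4, real_inner_smul_right, nsq_smul] at h3
    have hE3 : ‖G1-g2‖^2 - 2*μ*α*⟪y-x,G1-g2⟫ + μ^2*α^2*‖y-x‖^2
        ≤ 2*(L-μ)*(f₁ xp - f₁ y - α*⟪g2,y-x⟫ - μ/2*(α^2*‖y-x‖^2)) := by linarith [h3]
    have h4 := interp' f₁ μ L hμ0 hμL hf₁a hf₁b g2 y G1 xp hyg hG1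
    rw [show y - xp = (-α)•(y-x) from by rw [hstep]; module] at h4
    rw [show g2 - G1 - μ • ((-α)•(y-x))
        = (μ*α)•(y-x) + (0:ℝ)•(g1-g2) + (-1:ℝ)•(G1-g2) + (0:ℝ)•(G2-g2) from by module,
      nsq4, real_inner_smul_right, nsq_smul] at h4
    rw [show (inner ℝ G1 (y-x) : ℝ) = ⟪g2, y-x⟫ + ⟪y-x, G1-g2⟫ from by
      rw [← real_inner_comm (y-x) (G1-g2), ← inner_add_left,
        show g2 + (G1-g2) = G1 by abel]] at h4
    have hE4 : ‖G1-g2‖^2 - 2*μ*α*⟪y-x,G1-g2⟫ + μ^2*α^2*‖y-x‖^2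
        ≤ 2*(L-μ)*(f₁ y - f₁ xp + α*(⟪g2,y-x⟫ + ⟪y-x,G1-g2⟫) - μ/2*(α^2*‖y-x‖^2)) := by
      linarith [h4]
    have h7 := interp' f₂ μ L hμ0 hμL hf₂a hf₂b G2 xp g2 x hG2 hg2
    rw [show xp - x = (1+α)•(y-x) from by rw [hstep]; module] at h7
    rw [show G2 - g2 - μ • ((1+α)•(y-x))
        = (-(μ*(1+α)))•(y-x) + (0:ℝ)•(g1-g2) + (0:ℝ)•(G1-g2) + (1:ℝ)•(G2-g2) from by module,
      nsq4, real_inner_smul_right, nsq_smul] at h7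
    have hE7 : ‖G2-g2‖^2 - 2*μ*(1+α)*⟪y-x,G2-g2⟫ + μ^2*(1+α)^2*‖y-x‖^2
        ≤ 2*(L-μ)*(f₂ xp - f₂ x - (1+α)*⟪g2,y-x⟫ - μ/2*((1+α)^2*‖y-x‖^2)) := by
      linarith [h7]
    have hS0 := nsq4_nonneg (y-x) (g1-g2) (G1-g2) (G2-g2)
      (2*μ*(L+2*α*(L+μ))*L) (μ*(L+2*α*(L+μ))) (-(L*(L+μ-μ*α))) (-(μ*L*(1+α)))
    have hS1 := nsq4_nonneg (y-x) (g1-g2) (G1-g2) (G2-g2)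
      (0:ℝ) (μ*(L+2*α*(L+μ))) (L*(L+μ-μ*α)) (μ*L*(1+α))
    have hSV := nsq4_nonneg (y-x) (g1-g2) (G1-g2) (G2-g2)
      (0:ℝ) (0:ℝ) (L+μ*α) (-(α*μ))
    have hcert := cert_pos μ L α (‖y-x‖^2) (‖g1-g2‖^2) (‖G1-g2‖^2) (‖G2-g2‖^2)
      (⟪y-x,g1-g2⟫) (⟪y-x,G1-g2⟫) (⟪y-x,G2-g2⟫) (⟪g1-g2,G1-g2⟫) (⟪g1-g2,G2-g2⟫)
      (⟪G1-g2,G2-g2⟫) (⟪g2,y-x⟫) (f₁ x) (f₁ y) (f₁ xp) (f₂ x) (f₂ xp)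
      hμ0 hμL hαp hα1 hα2 hE1 hE2 hE3 hE4 hE7 hS0 hS1 hSV
    have hGG : ‖G1 - G2‖^2 = ‖G1-g2‖^2 - 2*⟪G1-g2,G2-g2⟫ + ‖G2-g2‖^2 := by
      rw [show G1 - G2 = (G1-g2) - (G2-g2) by abel, norm_sub_sq_real]
    rw [hGG]
    linarith [hcert]

end Key

theorem boosted_dca_sublinear
    (n : ℕ) (hn : 0 < n)
    (μ L : ℝ) (hμ : 0 ≤ μ) (hμL : μ < L)
    (κ : ℝ) (hκ : κ = μ / L)
    (α : ℝ) (hα0 : 0 ≤ α) (hα1 : α ≤ min 1 (2 * κ))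
    (f₁ f₂ : EuclideanSpace ℝ (Fin n) → ℝ)
    (hf₁ : MemFClass μ L f₁) (hf₂ : MemFClass μ L f₂)
    (f : EuclideanSpace ℝ (Fin n) → ℝ) (hf : ∀ x, f x = f₁ x - f₂ x)
    (fstar : ℝ) (hfstar : IsGLB (Set.range f) fstar)
    (N : ℕ) (hN : 0 < N)
    (x y g1 g2 : ℕ → EuclideanSpace ℝ (Fin n))
    (hg1 : ∀ k ∈ Finset.Icc 1 (N + 1), SubgradAt f₁ (g1 k) (x k))
    (hg2 : ∀ k ∈ Finset.Icc 1 (N + 1), SubgradAt f₂ (g2 k) (x k))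
    (hy : ∀ k ∈ Finset.Icc 1 N, SubgradAt f₁ (g2 k) (y k))
    (hstep : ∀ k ∈ Finset.Icc 1 N, x (k + 1) = y k + α • (y k - x k)) :
    (Finset.Icc 1 (N + 1)).inf' (Finset.nonempty_Icc.mpr (by omega))
        (fun k => ‖g1 k - g2 k‖ ^ 2 / L)
      ≤ (f (x 1) - fstar) / ((1 + κ * α) * N + 1 / (2 * (1 - κ))) := by
  have hL : 0 < L := lt_of_le_of_lt hμ hμL
  have hL0 : L ≠ 0 := ne_of_gt hL
  have hμκ : μ = κ * L := by rw [hκ]; field_simp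
  subst hμκ
  have hκ0 : 0 ≤ κ := by nlinarith
  have hκ1 : κ < 1 := by nlinarith
  have hα1' : α ≤ 1 := le_trans hα1 (min_le_left _ _)
  have hα2' : α ≤ 2 * κ := le_trans hα1 (min_le_right _ _)
  have hαL : α * L ≤ 2 * (κ * L) := by nlinarith
  set m := (Finset.Icc 1 (N + 1)).inf' (Finset.nonempty_Icc.mpr (by omega))
      (fun k => ‖g1 k - g2 k‖ ^ 2 / L) with hmdef
  have hmle : ∀ k ∈ Finset.Icc 1 (N + 1), m ≤ ‖g1 k - g2 k‖ ^ 2 / L := by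
    intro k hk
    exact Finset.inf'_le _ hk
  have h2κ : (0:ℝ) < 2 * (1 - κ) := by linarith
  have hN1 : (1:ℝ) ≤ (N:ℝ) := by exact_mod_cast hN
  have hκα : (0:ℝ) ≤ κ * α := mul_nonneg hκ0 hα0
  have hD : (0:ℝ) < (1 + κ * α) * N + 1 / (2 * (1 - κ)) := by
    have h1 : (0:ℝ) < 1 / (2 * (1 - κ)) := by positivity
    nlinarith [mul_nonneg hκα (le_trans zero_le_one hN1)]
  rw [le_div_iff₀ hD]
  have hterm : ∀ i ∈ Finset.range N,
      (1 + κ * α) * m ≤ f (x (i + 1)) - f (x (i + 1 + 1)) := by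
    intro i hi
    have hiN : i < N := Finset.mem_range.mp hi
    have m1 : (i + 1) ∈ Finset.Icc 1 (N + 1) := Finset.mem_Icc.mpr ⟨by omega, by omega⟩
    have m2 : (i + 1) ∈ Finset.Icc 1 N := Finset.mem_Icc.mpr ⟨by omega, by omega⟩
    have m3 : (i + 1 + 1) ∈ Finset.Icc 1 (N + 1) := Finset.mem_Icc.mpr ⟨by omega, by omega⟩
    have hk := key_step f₁ f₂ (κ * L) L α hμ hμL hα0 hα1' hαL hf₁.1 hf₁.2 hf₂.1 hf₂.2
      (x (i + 1)) (y (i + 1)) (x (i + 1 + 1)) (g1 (i + 1)) (g2 (i + 1))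
      (g1 (i + 1 + 1)) (g2 (i + 1 + 1))
      (hg1 _ m1) (hg2 _ m1) (hy _ m2) (hg1 _ m3) (hg2 _ m3) (hstep _ m2)
    have ha := (le_div_iff₀ hL).mp (hmle _ m1)
    have hb := (le_div_iff₀ hL).mp (hmle _ m3)
    have hcoef : (0:ℝ) ≤ L + 2 * (κ * L) * α := by nlinarith
    have n1 := mul_nonneg hcoef (sub_nonneg.mpr ha)
    have n2 := mul_nonneg hL.le (sub_nonneg.mpr hb)
    have h2 : 2 * L ^ 2 * ((1 + κ * α) * m)
        ≤ 2 * L ^ 2 * ((f₁ (x (i + 1)) - f₂ (x (i + 1)))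
          - (f₁ (x (i + 1 + 1)) - f₂ (x (i + 1 + 1)))) := by
      linarith [hk, n1, n2]
    have h3 := (mul_le_mul_iff_right₀ (mul_pos two_pos (pow_pos hL 2))).mp h2
    rw [hf (x (i + 1)), hf (x (i + 1 + 1))]
    exact h3
  have hsum1 : (N:ℝ) * ((1 + κ * α) * m) ≤ f (x 1) - f (x (N + 1)) := by
    have h := Finset.sum_le_sum hterm
    rw [Finset.sum_const, Finset.card_range, nsmul_eq_mul] at h
    have htele : ∑ i ∈ Finset.range N, (f (x (i + 1)) - f (x (i + 1 + 1)))
        = f (x 1) - f (x (N + 1)) := by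
      simpa using Finset.sum_range_sub' (fun i => f (x (i + 1))) N
    rw [htele] at h
    exact h
  have mN : (N + 1) ∈ Finset.Icc 1 (N + 1) := Finset.mem_Icc.mpr ⟨by omega, le_refl _⟩
  have hmN := (le_div_iff₀ hL).mp (hmle _ mN)
  have hfin := final_step' f₁ f₂ (κ * L) L hμ hμL hf₁.2 hf₂.1
    (x (N + 1)) (g1 (N + 1)) (g2 (N + 1)) (hg1 _ mN) (hg2 _ mN)
  set w := x (N + 1) - ((L - κ * L)⁻¹) • (g1 (N + 1) - g2 (N + 1)) with hwdef
  have hfs : fstar ≤ f₁ w - f₂ w := by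
    have h := hfstar.1 (Set.mem_range_self w)
    rwa [hf w] at h
  have hfinal : m * (1 / (2 * (1 - κ))) ≤ f (x (N + 1)) - fstar := by
    rw [hf (x (N + 1))]
    rw [mul_one_div, div_le_iff₀ h2κ]
    have hB := mul_nonneg (by nlinarith : (0:ℝ) ≤ 2 * L * (1 - κ)) (sub_nonneg.mpr hfs)
    have hh : L * m ≤ L * ((f₁ (x (N + 1)) - f₂ (x (N + 1)) - fstar) * (2 * (1 - κ))) := by
      linarith [hmN, hfin, hB]
    exact (mul_le_mul_iff_right₀ hL).mp hh
  linarith [hsum1, hfinal]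
end

section
/- Let n be a positive integer, let μ₁ ≤ L₁ and μ₂ ≤ L₂ be real numbers with L₁ > μ₂, let f₁ ∈ F_{μ₁,L₁}(ℝⁿ) and f₂ ∈ F_{μ₂,L₂}(ℝⁿ), and set f := f₁ − f₂ with f⋆ := inf_{x ∈ ℝⁿ} f(x) finite. Then for every x ∈ ℝⁿ and every g₁ ∈ ∂f₁(x) and g₂ ∈ ∂f₂(x), one has f⋆ ≤ f(x) − ‖g₁ − g₂‖² / (2(L₁ − μ₂)). -/
variable {n : ℕ}

lemma convex_lower_of_approx (ψ : EuclideanSpace ℝ (Fin n) → ℝ)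
    (hψ : ConvexOn ℝ Set.univ ψ)
    (x w : EuclideanSpace ℝ (Fin n)) (C : ℝ) (hC : 0 ≤ C)
    (h : ∀ y, ψ x + (inner ℝ w (y - x) : ℝ) - C * ‖y - x‖ ^ 2 ≤ ψ y) :
    ∀ y, ψ x + (inner ℝ w (y - x) : ℝ) ≤ ψ y := by
  intro y
  apply le_of_forall_pos_le_add
  intro ε hε
  set D : ℝ := ‖y - x‖ ^ 2 with hD
  have hD0 : 0 ≤ D := by positivity
  set t : ℝ := min 1 (ε / (C * D + 1)) with ht
  have ht0 : 0 < t := lt_min one_pos (by positivity)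
  have ht1 : t ≤ 1 := min_le_left _ _
  have hcv := hψ.2 (Set.mem_univ x) (Set.mem_univ y)
      (by linarith : (0:ℝ) ≤ 1 - t) (le_of_lt ht0) (by ring)
  have hpt : (1 - t) • x + t • y = x + t • (y - x) := by module
  rw [hpt] at hcv
  have hz := h (x + t • (y - x))
  have h1 : (inner ℝ w (x + t • (y - x) - x) : ℝ) = t * (inner ℝ w (y - x) : ℝ) := by
    rw [show x + t • (y - x) - x = t • (y - x) by abel]
    exact real_inner_smul_right w _ t
  have h2 : ‖x + t • (y - x) - x‖ ^ 2 = t ^ 2 * D := by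
    rw [show x + t • (y - x) - x = t • (y - x) by abel, norm_smul,
      Real.norm_eq_abs, abs_of_pos ht0]; ring
  rw [h1, h2] at hz
  -- combine hz and hcv
  have key : (inner ℝ w (y - x) : ℝ) - C * t * D ≤ ψ y - ψ x := by
    rw [smul_eq_mul, smul_eq_mul] at hcv
    have h4 : t * ((inner ℝ w (y - x) : ℝ) - C * t * D) ≤ t * (ψ y - ψ x) := by
      nlinarith [hz.trans hcv]
    exact le_of_mul_le_mul_left h4 ht0
  have hts : t ≤ ε / (C * D + 1) := min_le_right _ _
  have : C * t * D ≤ ε := by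
    have h3 : t * (C * D + 1) ≤ ε :=
      (le_div_iff₀ (by positivity : (0:ℝ) < C * D + 1)).mp hts
    nlinarith
  linarith

lemma convex_lower_of_upper_approx (ψ : EuclideanSpace ℝ (Fin n) → ℝ)
    (hψ : ConvexOn ℝ Set.univ ψ)
    (x v : EuclideanSpace ℝ (Fin n)) (C : ℝ) (hC : 0 ≤ C)
    (h : ∀ y, ψ y ≤ ψ x + (inner ℝ v (y - x) : ℝ) + C * ‖y - x‖ ^ 2) :
    ∀ y, ψ x + (inner ℝ v (y - x) : ℝ) ≤ ψ y := by
  apply convex_lower_of_approx ψ hψ x v C hC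
  intro y
  have hcv := hψ.2 (Set.mem_univ y) (Set.mem_univ ((2:ℝ) • x - y))
      (by norm_num : (0:ℝ) ≤ 1/2) (by norm_num : (0:ℝ) ≤ 1/2) (by norm_num)
  have hpt : (1/2 : ℝ) • y + (1/2 : ℝ) • ((2:ℝ) • x - y) = x := by module
  rw [hpt, smul_eq_mul, smul_eq_mul] at hcv
  have hrefl := h ((2:ℝ) • x - y)
  have h1 : (inner ℝ v ((2:ℝ) • x - y - x) : ℝ) = -(inner ℝ v (y - x) : ℝ) := by
    rw [show (2:ℝ) • x - y - x = -(y - x) by module]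
    exact inner_neg_right v (y - x)
  have h2 : ‖(2:ℝ) • x - y - x‖ ^ 2 = ‖y - x‖ ^ 2 := by
    rw [show (2:ℝ) • x - y - x = -(y - x) by module, norm_neg]
  rw [h1, h2] at hrefl
  linarith

/-- Descent lemma for DC decompositions. -/
theorem dc_descent_lemma
    (n : ℕ) (hn : 0 < n)
    (μ₁ L₁ μ₂ L₂ : ℝ) (h₁ : μ₁ ≤ L₁) (h₂ : μ₂ ≤ L₂) (hL₁μ₂ : μ₂ < L₁)
    (f₁ f₂ : EuclideanSpace ℝ (Fin n) → ℝ)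
    (hf₁ : MemFClass μ₁ L₁ f₁) (hf₂ : MemFClass μ₂ L₂ f₂)
    (f : EuclideanSpace ℝ (Fin n) → ℝ) (hf : ∀ x, f x = f₁ x - f₂ x)
    (fstar : ℝ) (hfstar : IsGLB (Set.range f) fstar)
    (x g₁ g₂ : EuclideanSpace ℝ (Fin n))
    (hg₁ : SubgradAt f₁ g₁ x) (hg₂ : SubgradAt f₂ g₂ x) :
    fstar ≤ f x - ‖g₁ - g₂‖ ^ 2 / (2 * (L₁ - μ₂)) := by
  set L : ℝ := L₁ - μ₂ with hL
  have hL0 : 0 < L := by simp [hL]; linarith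
  set g : EuclideanSpace ℝ (Fin n) := g₁ - g₂ with hg
  -- expand squared norms
  have expand : ∀ y : EuclideanSpace ℝ (Fin n),
      ‖y‖ ^ 2 = ‖x‖ ^ 2 + 2 * (inner ℝ x (y - x) : ℝ) + ‖y - x‖ ^ 2 := by
    intro y
    have : y = x + (y - x) := by abel
    rw [this]
    rw [show x + (y - x) - x = y - x by abel]
    rw [norm_add_sq_real]
  -- smoothness upper bound for f₁
  have hφ : ∀ y, f₁ y ≤ f₁ x + (inner ℝ g₁ (y - x) : ℝ) + L₁ / 2 * ‖y - x‖ ^ 2 := by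
    have hub : ∀ y, (fun z => L₁ / 2 * ‖z‖ ^ 2 - f₁ z) y ≤
        (fun z => L₁ / 2 * ‖z‖ ^ 2 - f₁ z) x
          + (inner ℝ (L₁ • x - g₁) (y - x) : ℝ) + (|L₁| / 2) * ‖y - x‖ ^ 2 := by
      intro y
      have hsub := hg₁ y
      have hi : (inner ℝ (L₁ • x - g₁) (y - x) : ℝ)
          = L₁ * (inner ℝ x (y - x) : ℝ) - (inner ℝ g₁ (y - x) : ℝ) := by
        rw [inner_sub_left, real_inner_smul_left]
      simp only []
      rw [hi, expand y]
      have : L₁ / 2 * ‖y - x‖ ^ 2 ≤ |L₁| / 2 * ‖y - x‖ ^ 2 := by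
        have h5 := mul_le_mul_of_nonneg_right (le_abs_self L₁) (sq_nonneg ‖y - x‖)
        linarith
      nlinarith
    have := convex_lower_of_upper_approx _ hf₁.2 x (L₁ • x - g₁) (|L₁| / 2)
      (by positivity) hub
    intro y
    have h3 := this y
    have hi : (inner ℝ (L₁ • x - g₁) (y - x) : ℝ)
        = L₁ * (inner ℝ x (y - x) : ℝ) - (inner ℝ g₁ (y - x) : ℝ) := by
      rw [inner_sub_left, real_inner_smul_left]
    rw [hi, expand y] at h3
    nlinarith
  -- strong convexity lower bound for f₂
  have hψ : ∀ y, f₂ x + (inner ℝ g₂ (y - x) : ℝ) + μ₂ / 2 * ‖y - x‖ ^ 2 ≤ f₂ y := by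
    have hlb : ∀ y, (fun z => f₂ z - μ₂ / 2 * ‖z‖ ^ 2) x
        + (inner ℝ (g₂ - μ₂ • x) (y - x) : ℝ) - (|μ₂| / 2) * ‖y - x‖ ^ 2 ≤
        (fun z => f₂ z - μ₂ / 2 * ‖z‖ ^ 2) y := by
      intro y
      have hsub := hg₂ y
      have hi : (inner ℝ (g₂ - μ₂ • x) (y - x) : ℝ)
          = (inner ℝ g₂ (y - x) : ℝ) - μ₂ * (inner ℝ x (y - x) : ℝ) := by
        rw [inner_sub_left, real_inner_smul_left]
      simp only []
      rw [hi, expand y]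
      have : -(|μ₂| / 2) * ‖y - x‖ ^ 2 ≤ -(μ₂ / 2) * ‖y - x‖ ^ 2 := by
        have h5 := mul_le_mul_of_nonneg_right (le_abs_self μ₂) (sq_nonneg ‖y - x‖)
        linarith
      nlinarith
    have := convex_lower_of_approx _ hf₂.1 x (g₂ - μ₂ • x) (|μ₂| / 2)
      (by positivity) hlb
    intro y
    have h3 := this y
    have hi : (inner ℝ (g₂ - μ₂ • x) (y - x) : ℝ)
        = (inner ℝ g₂ (y - x) : ℝ) - μ₂ * (inner ℝ x (y - x) : ℝ) := by
      rw [inner_sub_left, real_inner_smul_left]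
    rw [hi, expand y] at h3
    nlinarith
  -- plug in y₀ = x - (1/L) • g
  set y₀ : EuclideanSpace ℝ (Fin n) := x - (1 / L) • g with hy₀
  have hdiff : y₀ - x = -((1 / L) • g) := by rw [hy₀]; abel
  have hin : ∀ u : EuclideanSpace ℝ (Fin n),
      (inner ℝ u (y₀ - x) : ℝ) = -(1 / L) * (inner ℝ u g : ℝ) := by
    intro u
    rw [hdiff, inner_neg_right, real_inner_smul_right]
    ring
  have hnorm : ‖y₀ - x‖ ^ 2 = (1 / L) ^ 2 * ‖g‖ ^ 2 := by
    rw [hdiff, norm_neg, norm_smul, Real.norm_eq_abs, abs_of_pos (by positivity)]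
    ring
  have hg1 : (inner ℝ g₁ g : ℝ) - (inner ℝ g₂ g : ℝ) = ‖g‖ ^ 2 := by
    rw [← inner_sub_left, ← hg, real_inner_self_eq_norm_sq]
  have hstep : f y₀ ≤ f x - ‖g‖ ^ 2 / (2 * L) := by
    have hA := hφ y₀
    have hB := hψ y₀
    rw [hin g₁, hnorm] at hA
    rw [hin g₂, hnorm] at hB
    rw [hf y₀, hf x]
    have hL' : L ≠ 0 := ne_of_gt hL0
    set I₁ : ℝ := (inner ℝ g₁ g : ℝ) with hI₁
    set I₂ : ℝ := (inner ℝ g₂ g : ℝ) with hI₂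
    set N : ℝ := ‖g‖ ^ 2 with hN
    have harith : -(1 / L) * I₁ + L₁ / 2 * ((1 / L) ^ 2 * N)
        - (-(1 / L) * I₂ + μ₂ / 2 * ((1 / L) ^ 2 * N)) = -(N / (2 * L)) := by
      have hI : I₁ = I₂ + N := by linarith [hg1]
      have hLe : L₁ = L + μ₂ := by rw [hL]; ring
      rw [hI, hLe]
      field_simp
      ring
    linarith [hA, hB, harith]
  calc fstar ≤ f y₀ := hfstar.1 ⟨y₀, rfl⟩
    _ ≤ f x - ‖g‖ ^ 2 / (2 * L) := hstep
    _ = f x - ‖g₁ - g₂‖ ^ 2 / (2 * (L₁ - μ₂)) := by rw [hg, hL]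
end

section
/- Let n be a positive integer, let μ > 0, and let f₁, f₂ : ℝⁿ → ℝ be convex functions each with minimum curvature μ (i.e., x ↦ fᵢ(x) − (μ/2)‖x‖² is convex for i = 1, 2). Suppose f := f₁ − f₂ is continuously differentiable. Let x ∈ ℝⁿ, let g₂ ∈ ∂f₂(x), let y ∈ ℝⁿ minimize u ↦ f₁(u) − (f₂(x) + ⟨g₂, u − x⟩) over ℝⁿ, and set d := y − x. Then ⟨∇f(y), d⟩ ≤ −μ‖d‖². -/
open Set Filter InnerProductSpace
open scoped Topology

section Aux

variable {n : ℕ}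

lemma norm_add_smul_sq (a b : EuclideanSpace ℝ (Fin n)) (t : ℝ) :
    ‖a + t • b‖ ^ 2 = ‖a‖ ^ 2 + 2 * t * (inner ℝ a b : ℝ) + t ^ 2 * ‖b‖ ^ 2 := by
  rw [norm_add_sq_real, real_inner_smul_right, norm_smul]
  simp [mul_pow, sq_abs]
  ring

lemma strong_combo (μ : ℝ) (f₂ : EuclideanSpace ℝ (Fin n) → ℝ)
    (h : ConvexOn ℝ Set.univ (fun x => f₂ x - μ / 2 * ‖x‖ ^ 2))
    (x y : EuclideanSpace ℝ (Fin n)) (t : ℝ) (ht0 : 0 ≤ t) (ht1 : t ≤ 1) :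
    f₂ (x + t • (y - x))
      ≤ (1 - t) * f₂ x + t * f₂ y - μ / 2 * (t * (1 - t)) * ‖y - x‖ ^ 2 := by
  have hc := h.2 (Set.mem_univ x) (Set.mem_univ y)
    (by linarith : (0:ℝ) ≤ 1 - t) ht0 (by ring)
  have hz : (1 - t) • x + t • y = x + t • (y - x) := by module
  rw [hz] at hc
  simp only [smul_eq_mul] at hc
  have h1 : ‖x + t • (y - x)‖ ^ 2
      = ‖x‖ ^ 2 + 2 * t * (inner ℝ x (y - x) : ℝ) + t ^ 2 * ‖y - x‖ ^ 2 :=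
    norm_add_smul_sq x (y - x) t
  have h2 : ‖y‖ ^ 2 = ‖x‖ ^ 2 + 2 * 1 * (inner ℝ x (y - x) : ℝ) + 1 ^ 2 * ‖y - x‖ ^ 2 := by
    have e : x + (1:ℝ) • (y - x) = y := by module
    have := norm_add_smul_sq x (y - x) 1
    rw [e] at this
    exact this
  have h3 : (1 - t) * (f₂ x - μ / 2 * ‖x‖ ^ 2) + t * (f₂ y - μ / 2 * ‖y‖ ^ 2)
      + μ / 2 * ‖x + t • (y - x)‖ ^ 2
      = (1 - t) * f₂ x + t * f₂ y - μ / 2 * (t * (1 - t)) * ‖y - x‖ ^ 2 := by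
    rw [h1, h2]; ring
  linarith [hc, h3]

lemma strong_subgrad (μ : ℝ) (hμ : 0 < μ) (f₂ : EuclideanSpace ℝ (Fin n) → ℝ)
    (hcurv₂ : ConvexOn ℝ Set.univ (fun x => f₂ x - μ / 2 * ‖x‖ ^ 2))
    (x g₂ : EuclideanSpace ℝ (Fin n)) (hg₂ : SubgradAt f₂ g₂ x)
    (y : EuclideanSpace ℝ (Fin n)) :
    f₂ x + (inner ℝ g₂ (y - x) : ℝ) + μ / 2 * ‖y - x‖ ^ 2 ≤ f₂ y := by
  have key : ∀ t : ℝ, 0 < t → t ≤ 1 →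
      (inner ℝ g₂ (y - x) : ℝ) + μ / 2 * (1 - t) * ‖y - x‖ ^ 2 ≤ f₂ y - f₂ x := by
    intro t ht0 ht1
    have h1 := hg₂ (x + t • (y - x))
    have e1 : (inner ℝ g₂ ((x + t • (y - x)) - x) : ℝ) = t * (inner ℝ g₂ (y - x) : ℝ) := by
      rw [add_sub_cancel_left, real_inner_smul_right]
    rw [e1] at h1
    have h2 := strong_combo μ f₂ hcurv₂ x y t ht0.le ht1
    nlinarith [h1, h2, ht0]
  by_contra hcon
  push_neg at hcon
  set ε := (f₂ x + (inner ℝ g₂ (y - x) : ℝ) + μ / 2 * ‖y - x‖ ^ 2) - f₂ y with hε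
  have hεpos : 0 < ε := by simp only [hε]; linarith
  have hden : (0:ℝ) < μ / 2 * ‖y - x‖ ^ 2 + 1 := by positivity
  set t := min 1 (ε / (μ / 2 * ‖y - x‖ ^ 2 + 1)) with hte
  have ht0 : 0 < t := lt_min one_pos (div_pos hεpos hden)
  have ht1 : t ≤ 1 := min_le_left _ _
  have htR : t ≤ ε / (μ / 2 * ‖y - x‖ ^ 2 + 1) := min_le_right _ _
  have htd : t * (μ / 2 * ‖y - x‖ ^ 2 + 1) ≤ ε := by
    rw [← le_div_iff₀ hden]; exact htR
  have hk := key t ht0 ht1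
  have hns : (0:ℝ) ≤ ‖y - x‖ ^ 2 := by positivity
  nlinarith [hk, htd, ht0.le]

end Aux

/-- The DCA direction `d = y - x` is a descent direction at `y`. -/
theorem dca_descent_direction
    (n : ℕ) (hn : 0 < n)
    (μ : ℝ) (hμ : 0 < μ)
    (f₁ f₂ : EuclideanSpace ℝ (Fin n) → ℝ)
    (hconv₁ : ConvexOn ℝ Set.univ f₁) (hconv₂ : ConvexOn ℝ Set.univ f₂)
    (hcurv₁ : ConvexOn ℝ Set.univ (fun x => f₁ x - μ / 2 * ‖x‖ ^ 2))
    (hcurv₂ : ConvexOn ℝ Set.univ (fun x => f₂ x - μ / 2 * ‖x‖ ^ 2))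
    (f : EuclideanSpace ℝ (Fin n) → ℝ) (hf : ∀ x, f x = f₁ x - f₂ x)
    (hsmooth : ContDiff ℝ 1 f)
    (x g₂ : EuclideanSpace ℝ (Fin n)) (hg₂ : SubgradAt f₂ g₂ x)
    (y : EuclideanSpace ℝ (Fin n))
    (hy : ∀ u, f₁ y - (f₂ x + (inner ℝ g₂ (y - x) : ℝ))
        ≤ f₁ u - (f₂ x + (inner ℝ g₂ (u - x) : ℝ)))
    (d : EuclideanSpace ℝ (Fin n)) (hd : d = y - x) :
    (inner ℝ (gradient f y) d : ℝ) ≤ -μ * ‖d‖ ^ 2 := by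
  subst hd
  -- Step A: g₂ is a subgradient of f₁ at y
  have hA : ∀ u, f₁ y + (inner ℝ g₂ (u - y) : ℝ) ≤ f₁ u := by
    intro u
    have h := hy u
    have e : (inner ℝ g₂ (u - x) : ℝ) = inner ℝ g₂ (u - y) + (inner ℝ g₂ (y - x) : ℝ) := by
      rw [← inner_add_right]
      congr 1
      abel
    rw [e] at h
    linarith
  -- Step B: strong subgradient inequality for f₂ at x
  have hB := strong_subgrad μ hμ f₂ hcurv₂ x g₂ hg₂ y
  -- per-t inequality
  have hper : ∀ t : ℝ, 0 < t → t ≤ 1 →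
      (f y - f (y - t • (y - x))) / t ≤ -μ * (1 - t / 2) * ‖y - x‖ ^ 2 := by
    intro t ht0 ht1
    have hA' := hA (y - t • (y - x))
    have e1 : (inner ℝ g₂ ((y - t • (y - x)) - y) : ℝ) = -(t * (inner ℝ g₂ (y - x) : ℝ)) := by
      have e : (y - t • (y - x)) - y = -(t • (y - x)) := by abel
      rw [e, inner_neg_right, real_inner_smul_right]
    rw [e1] at hA'
    have h2 := strong_combo μ f₂ hcurv₂ y x t ht0.le ht1
    have e2 : y + t • (x - y) = y - t • (y - x) := by module
    rw [e2] at h2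
    have e3 : ‖x - y‖ = ‖y - x‖ := norm_sub_rev _ _
    rw [e3] at h2
    rw [hf, hf, div_le_iff₀ ht0]
    nlinarith [hA', h2, hB, ht0, ht0.le]
  -- derivative along the curve t ↦ y - t • (y - x)
  have hdf : DifferentiableAt ℝ f y := hsmooth.differentiable one_ne_zero y
  have hgrad : HasGradientAt f (gradient f y) y := hdf.hasGradientAt
  have hcurve : HasDerivAt (fun t : ℝ => y - t • (y - x)) (-(y - x)) 0 := by
    have h1 : HasDerivAt (fun t : ℝ => t • (y - x)) (y - x) 0 := by
      simpa using (hasDerivAt_id (0:ℝ)).smul_const (y - x)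
    simpa using h1.const_sub y
  have hφ : HasDerivAt (fun t : ℝ => f (y - t • (y - x)))
      (-(inner ℝ (gradient f y) (y - x) : ℝ)) 0 := by
    have hgF : HasFDerivAt f ((toDual ℝ (EuclideanSpace ℝ (Fin n))) (gradient f y))
        (y - (0:ℝ) • (y - x)) := by simpa using hgrad.hasFDerivAt
    have hcomp := hgF.comp_hasDerivAt 0 hcurve
    have e : ((toDual ℝ (EuclideanSpace ℝ (Fin n))) (gradient f y)) (-(y - x))
        = -(inner ℝ (gradient f y) (y - x) : ℝ) := by
      rw [InnerProductSpace.toDual_apply_apply, inner_neg_right]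
    rw [e] at hcomp
    exact hcomp
  have hslope := hasDerivAt_iff_tendsto_slope.mp hφ
  have hmono : (𝓝[>] (0:ℝ)) ≤ (𝓝[≠] (0:ℝ)) :=
    nhdsWithin_mono _ (fun t ht => ne_of_gt ht)
  have h1 := hslope.mono_left hmono
  have h2 : Tendsto (fun t : ℝ => (f y - f (y - t • (y - x))) / t) (𝓝[>] (0:ℝ))
      (𝓝 (inner ℝ (gradient f y) (y - x) : ℝ)) := by
    have hneg := h1.neg
    rw [neg_neg] at hneg
    refine hneg.congr (fun t => ?_)
    have : slope (fun t : ℝ => f (y - t • (y - x))) 0 t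
        = (f (y - t • (y - x)) - f y) / t := by
      rw [slope_def_field]
      simp [div_eq_inv_mul]
    rw [this, ← neg_div, neg_sub]
  have h3 : Tendsto (fun t : ℝ => -μ * (1 - t / 2) * ‖y - x‖ ^ 2) (𝓝[>] (0:ℝ))
      (𝓝 (-μ * ‖y - x‖ ^ 2)) := by
    have hc : Continuous (fun t : ℝ => -μ * (1 - t / 2) * ‖y - x‖ ^ 2) := by fun_prop
    have := (hc.tendsto 0).mono_left (nhdsWithin_le_nhds (s := Set.Ioi (0:ℝ)))
    simpa using this
  refine le_of_tendsto_of_tendsto h2 h3 ?_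
  filter_upwards [Ioc_mem_nhdsGT_of_mem (left_mem_Ico.mpr one_pos)] with t ht
  exact hper t ht.1 ht.2
end

section
/- Let n be a positive integer, let 0 ≤ μ < L < ∞, let I be a finite index set, and let {(xⁱ, gⁱ, fⁱ)}_{i ∈ I} be a family with xⁱ, gⁱ ∈ ℝⁿ and fⁱ ∈ ℝ. Then the following are equivalent: (1) there exists a function f ∈ F_{μ,L}(ℝⁿ) such that f(xⁱ) = fⁱ and gⁱ ∈ ∂f(xⁱ) for all i ∈ I; (2) for all i, j ∈ I, one has (1/(2(1 − μ/L))) · ( (1/L)‖gⁱ − gʲ‖² + μ‖xⁱ − xʲ‖² − (2μ/L)⟨gʲ − gⁱ, xʲ − xⁱ⟩ ) ≤ fⁱ − fʲ − ⟨gʲ, xⁱ − xʲ⟩. -/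
open RealInnerProductSpace

section AuxLemmas

variable {n : ℕ}

/-- convexity of the squared norm, explicit form -/
private lemma normsq_combo (a b : ℝ) (ha : 0 ≤ a) (hb : 0 ≤ b) (hab : a + b = 1)
    (c d : EuclideanSpace ℝ (Fin n)) :
    ‖a • c + b • d‖^2 ≤ a * ‖c‖^2 + b * ‖d‖^2 := by
  have h1 : ‖a • c + b • d‖^2 = a^2*⟪c,c⟫ + 2*(a*b)*⟪c,d⟫ + b^2*⟪d,d⟫ := by
    rw [← real_inner_self_eq_norm_sq]
    simp only [real_inner_add_add_self, real_inner_smul_left, real_inner_smul_right]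
    ring
  have h2 : (0:ℝ) ≤ ⟪c - d, c - d⟫ := real_inner_self_nonneg
  have h3 : ⟪c - d, c - d⟫ = ⟪c,c⟫ - 2*⟪c,d⟫ + ⟪d,d⟫ := by
    simp only [inner_sub_left, inner_sub_right, real_inner_comm c d]; ring
  have h4 : ⟪c,c⟫ = ‖c‖^2 := real_inner_self_eq_norm_sq c
  have h5 : ⟪d,d⟫ = ‖d‖^2 := real_inner_self_eq_norm_sq d
  nlinarith [mul_nonneg ha hb]

private lemma convexOn_normsq (c : ℝ) (hc : 0 ≤ c) :
    ConvexOn ℝ Set.univ (fun y : EuclideanSpace ℝ (Fin n) => c * ‖y‖^2) := by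
  refine ⟨convex_univ, fun p _ q _ a b ha hb hab => ?_⟩
  simp only [smul_eq_mul]
  nlinarith [normsq_combo a b ha hb hab p q, hc]

/-- Lemma A: a convex function with an upper quadratic bound at `x` has the
corresponding linear lower bound there. -/
private lemma subgrad_of_upper {ψ : EuclideanSpace ℝ (Fin n) → ℝ}
    (hc : ConvexOn ℝ Set.univ ψ) (x u : EuclideanSpace ℝ (Fin n)) (C : ℝ) (hC : 0 ≤ C)
    (hub : ∀ z, ψ z ≤ ψ x + ⟪u, z - x⟫ + C * ‖z - x‖^2) :
    ∀ z, ψ x + ⟪u, z - x⟫ ≤ ψ z := by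
  intro z
  set d := z - x with hd
  have H : ∀ t : ℝ, 0 < t → t ≤ 1 → ψ x + ⟪u, d⟫ ≤ ψ z + C * t * ‖d‖^2 := by
    intro t ht ht1
    have c1 : ψ (x + t • d) ≤ (1 - t) * ψ x + t * ψ z := by
      have := hc.2 (Set.mem_univ x) (Set.mem_univ z) (by linarith : (0:ℝ) ≤ 1 - t)
        (le_of_lt ht) (by ring)
      have he : (1 - t) • x + t • z = x + t • d := by
        rw [hd]; module
      rw [he] at this
      simpa using this
    have c2 : ψ x ≤ (1/2) * ψ (x + t • d) + (1/2) * ψ (x - t • d) := by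
      have := hc.2 (Set.mem_univ (x + t • d)) (Set.mem_univ (x - t • d))
        (by norm_num : (0:ℝ) ≤ 1/2) (by norm_num : (0:ℝ) ≤ 1/2) (by norm_num)
      have he : (1/2 : ℝ) • (x + t • d) + (1/2 : ℝ) • (x - t • d) = x := by module
      rw [he] at this
      simpa using this
    have c3 : ψ (x - t • d) ≤ ψ x - t * ⟪u, d⟫ + C * t^2 * ‖d‖^2 := by
      have := hub (x - t • d)
      have h1 : x - t • d - x = -(t • d) := by module
      rw [h1] at this
      have h2 : ⟪u, -(t • d)⟫ = -(t * ⟪u, d⟫) := by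
        rw [inner_neg_right, real_inner_smul_right]
      have h3 : ‖-(t • d)‖^2 = t^2 * ‖d‖^2 := by
        rw [norm_neg, norm_smul, mul_pow]
        simp [sq_abs]
      rw [h2, h3] at this
      linarith
    nlinarith [sq_nonneg t, mul_nonneg (mul_nonneg hC (sq_nonneg t)) (sq_nonneg ‖d‖)]
  refine le_of_forall_pos_le_add ?_
  intro ε hε
  rcases le_or_gt (C * ‖d‖^2) 0 with hcd | hcd
  · have := H 1 one_pos le_rfl
    nlinarith
  · set t := min 1 (ε / (C * ‖d‖^2)) with htdef
    have ht0 : 0 < t := lt_min one_pos (div_pos hε hcd)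
    have ht1 : t ≤ 1 := min_le_left _ _
    have := H t ht0 ht1
    have h2 : C * t * ‖d‖^2 ≤ ε := by
      have : t ≤ ε / (C * ‖d‖^2) := min_le_right _ _
      calc C * t * ‖d‖^2 = t * (C * ‖d‖^2) := by ring
        _ ≤ (ε / (C * ‖d‖^2)) * (C * ‖d‖^2) := by
            exact mul_le_mul_of_nonneg_right this (le_of_lt hcd)
        _ = ε := div_mul_cancel₀ ε (ne_of_gt hcd)
    linarith

private lemma norm_sq_expand (xx z : EuclideanSpace ℝ (Fin n)) :
    ‖z‖^2 = ‖xx‖^2 + 2*⟪xx, z - xx⟫ + ‖z - xx‖^2 := by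
  have h : z = xx + (z - xx) := by module
  nth_rewrite 1 [h]
  rw [← real_inner_self_eq_norm_sq, real_inner_add_add_self,
    real_inner_self_eq_norm_sq, real_inner_self_eq_norm_sq]

/-- descent lemma -/
private lemma descent_lemma {L : ℝ} (hL : 0 ≤ L) {f : EuclideanSpace ℝ (Fin n) → ℝ}
    (hc : ConvexOn ℝ Set.univ (fun y => L / 2 * ‖y‖^2 - f y))
    {xx gx : EuclideanSpace ℝ (Fin n)} (hg : ∀ y, f xx + ⟪gx, y - xx⟫ ≤ f y) :
    ∀ z, f z ≤ f xx + ⟪gx, z - xx⟫ + L / 2 * ‖z - xx‖^2 := by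
  set ψ : EuclideanSpace ℝ (Fin n) → ℝ := fun y => L / 2 * ‖y‖^2 - f y with hψ
  have key := subgrad_of_upper hc xx (L • xx - gx) (L/2) (by linarith) ?_
  · intro z
    have := key z
    have he : ⟪L • xx - gx, z - xx⟫ = L * ⟪xx, z - xx⟫ - ⟪gx, z - xx⟫ := by
      rw [inner_sub_left, real_inner_smul_left]
    have hnorm := norm_sq_expand xx z
    simp only [hψ] at this
    rw [he, hnorm] at this
    linarith
  · intro z
    have h1 := hg z
    have he : ⟪L • xx - gx, z - xx⟫ = L * ⟪xx, z - xx⟫ - ⟪gx, z - xx⟫ := by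
      rw [inner_sub_left, real_inner_smul_left]
    have hnorm := norm_sq_expand xx z
    simp only [hψ]
    rw [he, hnorm]
    linarith

/-- Moreau-type identity -/
private lemma moreau_id {ℓ : ℝ} (hℓ : 0 < ℓ) (y u : EuclideanSpace ℝ (Fin n)) :
    ℓ/2 * ‖y - ℓ⁻¹ • u‖^2 = ℓ/2*‖y‖^2 - ⟪y,u⟫ + ‖u‖^2/(2*ℓ) := by
  rw [norm_sub_sq_real, real_inner_smul_right, norm_smul, mul_pow, Real.norm_eq_abs, sq_abs]
  have hne : ℓ ≠ 0 := ne_of_gt hℓ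
  field_simp

/-- quadratic upper bound -/
private lemma quad_bound {ℓ : ℝ} (hℓ : 0 < ℓ) (w u : EuclideanSpace ℝ (Fin n)) :
    ⟪w,u⟫ - ‖u‖^2/(2*ℓ) ≤ ℓ/2*‖w‖^2 := by
  have h := moreau_id hℓ w u
  nlinarith [sq_nonneg ‖w - ℓ⁻¹ • u‖, hℓ]

private lemma scalar_ineq (ℓ N1 N2 P X1 X2 hj hi : ℝ) (hℓ : 0 < ℓ)
    (c : N1 - 2*P + N2 ≤ 2*ℓ*(hj - hi - (X1 - X2))) :
    N1/(2*ℓ) - hj + (X1 - ℓ⁻¹*P) ≤ N2/(2*ℓ) - hi + (X2 - ℓ⁻¹*N2) := by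
  have hne : ℓ ≠ 0 := ne_of_gt hℓ
  have h2l : (0:ℝ) < 2*ℓ := by linarith
  have l1 : 2*ℓ*(N1/(2*ℓ) - hj + (X1 - ℓ⁻¹*P)) = N1 - 2*ℓ*hj + 2*ℓ*X1 - 2*P := by
    field_simp; ring
  have l2 : 2*ℓ*(N2/(2*ℓ) - hi + (X2 - ℓ⁻¹*N2)) = N2 - 2*ℓ*hi + 2*ℓ*X2 - 2*N2 := by
    field_simp; ring
  have key : 2*ℓ*(N1/(2*ℓ) - hj + (X1 - ℓ⁻¹*P)) ≤ 2*ℓ*(N2/(2*ℓ) - hi + (X2 - ℓ⁻¹*N2)) := by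
    rw [l1, l2]; linarith
  exact le_of_mul_le_mul_left key h2l

private lemma scalar_id2 (ℓ Y N X hi : ℝ) (hℓ : ℓ ≠ 0) :
    Y - N/(2*ℓ) - (N/(2*ℓ) - hi + (X - ℓ⁻¹*N)) = hi + (Y - X) := by
  field_simp; ring

private lemma scalar_id1 (ℓ Xu Su Nu Ns hi : ℝ) (hℓ : ℓ ≠ 0) :
    Xu - Nu/(2*ℓ) - (Ns/(2*ℓ) - hi + (Xu - ℓ⁻¹*Su)) = hi - (Nu - 2*Su + Ns)/(2*ℓ) := by
  field_simp; ring

/-- sufficiency of the interpolation conditions, smooth convex case -/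
private theorem sufficiency_smooth
    (ℓ : ℝ) (hℓ : 0 < ℓ) (I : Type) [Fintype I] [Nonempty I]
    (x s : I → EuclideanSpace ℝ (Fin n)) (h : I → ℝ)
    (cond : ∀ i j, ‖s i - s j‖^2 ≤ 2*ℓ*(h i - h j - ⟪s j, x i - x j⟫)) :
    ∃ f : EuclideanSpace ℝ (Fin n) → ℝ,
      ConvexOn ℝ Set.univ f ∧ ConvexOn ℝ Set.univ (fun y => ℓ/2*‖y‖^2 - f y) ∧
      ∀ i, f (x i) = h i ∧ ∀ y, f (x i) + ⟪s i, y - x i⟫ ≤ f y := by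
  classical
  have hℓne : ℓ ≠ 0 := ne_of_gt hℓ
  set A : I → ℝ := fun j => ‖s j‖^2/(2*ℓ) - h j with hA
  set b : I → EuclideanSpace ℝ (Fin n) := fun j => x j - ℓ⁻¹ • s j with hb
  clear_value A b
  set G : EuclideanSpace ℝ (Fin n) → ℝ := fun u => ⨆ j, (A j + ⟪b j, u⟫) with hG
  clear_value G
  have Gle : ∀ j u, A j + ⟪b j, u⟫ ≤ G u := by
    intro j u
    rw [hG]
    exact le_ciSup (Set.Finite.bddAbove (Set.finite_range (fun j => A j + ⟪b j, u⟫))) j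
  have Gle' : ∀ u C, (∀ j, A j + ⟪b j, u⟫ ≤ C) → G u ≤ C := by
    intro u C hC
    rw [hG]
    exact ciSup_le hC
  set val : EuclideanSpace ℝ (Fin n) → EuclideanSpace ℝ (Fin n) → ℝ :=
    fun y u => ⟪y,u⟫ - ‖u‖^2/(2*ℓ) - G u with hval
  clear_value val
  have bdd : ∀ y, BddAbove (Set.range (val y)) := by
    intro y
    obtain ⟨j₀⟩ := (inferInstance : Nonempty I)
    refine ⟨ℓ/2*‖y - b j₀‖^2 - A j₀, ?_⟩
    rintro v ⟨u, rfl⟩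
    have h1 := Gle j₀ u
    have h2 := quad_bound hℓ (y - b j₀) u
    rw [inner_sub_left] at h2
    simp only [hval]
    linarith
  set f : EuclideanSpace ℝ (Fin n) → ℝ := fun y => sSup (Set.range (val y)) with hf
  clear_value f
  have hfeq : ∀ y, f y = sSup (Set.range (val y)) := fun y => by rw [hf]
  have le_f : ∀ y u, val y u ≤ f y := by
    intro y u
    rw [hfeq]
    exact le_csSup (bdd y) ⟨u, rfl⟩
  have f_le : ∀ y C, (∀ u, val y u ≤ C) → f y ≤ C := by
    intro y C hC
    rw [hfeq]
    exact csSup_le (Set.range_nonempty _) (by rintro v ⟨u, rfl⟩; exact hC u)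
  -- G is convex (it is a max of affine functions)
  have Gconv : ∀ (u v : EuclideanSpace ℝ (Fin n)) (a c : ℝ), 0 ≤ a → 0 ≤ c → a + c = 1 →
      G (a • u + c • v) ≤ a * G u + c * G v := by
    intro u v a c ha hc hac
    refine Gle' _ _ fun j => ?_
    have e : A j + ⟪b j, a • u + c • v⟫ = a * (A j + ⟪b j, u⟫) + c * (A j + ⟪b j, v⟫) := by
      rw [inner_add_right, real_inner_smul_right, real_inner_smul_right]
      linear_combination (-A j) * hac
    rw [e]
    have h1 := mul_le_mul_of_nonneg_left (Gle j u) ha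
    have h2 := mul_le_mul_of_nonneg_left (Gle j v) hc
    linarith
  -- f is convex
  have fconv : ConvexOn ℝ Set.univ f := by
    refine ⟨convex_univ, fun p _ q _ a c ha hc hac => ?_⟩
    simp only [smul_eq_mul]
    refine f_le _ _ fun u => ?_
    have e : val (a • p + c • q) u = a * val p u + c * val q u := by
      simp only [hval]
      rw [inner_add_left, real_inner_smul_left, real_inner_smul_left]
      linear_combination (‖u‖^2/(2*ℓ) + G u) * hac
    rw [e]
    have h1 := mul_le_mul_of_nonneg_left (le_f p u) ha
    have h2 := mul_le_mul_of_nonneg_left (le_f q u) hc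
    linarith
  -- ℓ-smoothness of f
  have fsmooth : ConvexOn ℝ Set.univ (fun y => ℓ/2*‖y‖^2 - f y) := by
    refine ⟨convex_univ, fun p _ q _ a c ha hc hac => ?_⟩
    simp only [smul_eq_mul]
    refine le_of_forall_pos_le_add ?_
    intro ε hε
    obtain ⟨vp', ⟨up, rfl⟩, hup⟩ :=
      exists_lt_of_lt_csSup (Set.range_nonempty (val p))
        (show f p - ε/2 < sSup (Set.range (val p)) by rw [← hfeq p]; linarith)
    obtain ⟨vq', ⟨uq, rfl⟩, huq⟩ :=
      exists_lt_of_lt_csSup (Set.range_nonempty (val q))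
        (show f q - ε/2 < sSup (Set.range (val q)) by rw [← hfeq q]; linarith)
    set z := a • p + c • q with hz
    set w := a • up + c • uq with hw
    have key : ℓ/2*‖z‖^2 - val z w ≤
        a * (ℓ/2*‖p‖^2 - val p up) + c * (ℓ/2*‖q‖^2 - val q uq) := by
      have ev : ∀ (y u : EuclideanSpace ℝ (Fin n)),
          ℓ/2*‖y‖^2 - val y u = ℓ/2 * ‖y - ℓ⁻¹ • u‖^2 + G u := by
        intro y u
        simp only [hval]
        rw [moreau_id hℓ]
        ring
      rw [ev, ev, ev]
      have hcombo : z - ℓ⁻¹ • w = a • (p - ℓ⁻¹ • up) + c • (q - ℓ⁻¹ • uq) := by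
        simp only [hz, hw]; module
      have h1 : ℓ/2 * ‖z - ℓ⁻¹ • w‖^2 ≤
          a * (ℓ/2 * ‖p - ℓ⁻¹ • up‖^2) + c * (ℓ/2 * ‖q - ℓ⁻¹ • uq‖^2) := by
        rw [hcombo]
        have := normsq_combo a c ha hc hac (p - ℓ⁻¹ • up) (q - ℓ⁻¹ • uq)
        nlinarith [hℓ]
      have h2 := Gconv up uq a c ha hc hac
      linarith
    have h3 := le_f z w
    nlinarith [key, hup, huq, ha, hc, hac, h3]
  -- interpolation of the values
  have hval_xi : ∀ i u, val (x i) u ≤ h i := by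
    intro i u
    have h1 := Gle i u
    have id1 : ⟪x i, u⟫ - ‖u‖^2/(2*ℓ) - (A i + ⟪b i, u⟫) = h i - ‖u - s i‖^2/(2*ℓ) := by
      simp only [hA, hb]
      rw [inner_sub_left, real_inner_smul_left, norm_sub_sq_real, real_inner_comm u (s i)]
      exact scalar_id1 ℓ _ _ _ _ _ hℓne
    have h2 : val (x i) u ≤ ⟪x i, u⟫ - ‖u‖^2/(2*ℓ) - (A i + ⟪b i, u⟫) := by
      simp only [hval]; linarith
    have h3 : (0:ℝ) ≤ ‖u - s i‖^2/(2*ℓ) := by positivity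
    linarith
  have hGsi : ∀ i, G (s i) = A i + ⟪b i, s i⟫ := by
    intro i
    refine le_antisymm (Gle' _ _ fun j => ?_) (Gle i (s i))
    have c1 := cond j i
    have e1 : ‖s j - s i‖^2 = ‖s j‖^2 - 2*⟪s j, s i⟫ + ‖s i‖^2 := by
      rw [norm_sub_sq_real]
    have e2 : ⟪s i, x j - x i⟫ = ⟪x j, s i⟫ - ⟪x i, s i⟫ := by
      rw [inner_sub_right, real_inner_comm (s i) (x j), real_inner_comm (s i) (x i)]
    rw [e1, e2] at c1
    simp only [hA, hb]
    rw [inner_sub_left, inner_sub_left, real_inner_smul_left, real_inner_smul_left,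
      real_inner_self_eq_norm_sq]
    exact scalar_ineq ℓ _ _ _ _ _ _ _ hℓ c1
  have hval_si : ∀ i, val (x i) (s i) = h i := by
    intro i
    simp only [hval]
    rw [hGsi i]
    simp only [hA, hb]
    rw [inner_sub_left, real_inner_smul_left, real_inner_self_eq_norm_sq]
    have := scalar_id2 ℓ ⟪x i, s i⟫ (‖s i‖^2) ⟪x i, s i⟫ (h i) hℓne
    rw [this]; ring
  have hfxi : ∀ i, f (x i) = h i := fun i =>
    le_antisymm (f_le _ _ (hval_xi i)) (by rw [← hval_si i]; exact le_f _ _)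
  refine ⟨f, fconv, fsmooth, fun i => ⟨hfxi i, fun y => ?_⟩⟩
  have h1 := le_f y (s i)
  have id2 : val y (s i) = h i + ⟪s i, y - x i⟫ := by
    simp only [hval]
    rw [hGsi i]
    simp only [hA, hb]
    rw [inner_sub_left, real_inner_smul_left, real_inner_self_eq_norm_sq, inner_sub_right]
    have hc1 : (⟪s i, y⟫:ℝ) = ⟪y, s i⟫ := real_inner_comm _ _
    have hc2 : (⟪s i, x i⟫:ℝ) = ⟪x i, s i⟫ := real_inner_comm _ _
    rw [hc1, hc2]
    exact scalar_id2 ℓ ⟪y, s i⟫ (‖s i‖^2) ⟪x i, s i⟫ (h i) hℓne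
  rw [hfxi i, ← id2]
  linarith

/-- necessity of the interpolation conditions -/
private theorem necessity
    (μ L : ℝ) (hμ : 0 ≤ μ) (hμL : μ < L)
    (I : Type) [Fintype I]
    (x g : I → EuclideanSpace ℝ (Fin n)) (fv : I → ℝ)
    (f : EuclideanSpace ℝ (Fin n) → ℝ)
    (hf1 : ConvexOn ℝ Set.univ (fun x => f x - μ / 2 * ‖x‖ ^ 2))
    (hf2 : ConvexOn ℝ Set.univ (fun x => L / 2 * ‖x‖ ^ 2 - f x))
    (hfv : ∀ i, f (x i) = fv i) (hsg : ∀ i, ∀ y, f (x i) + ⟪g i, y - x i⟫ ≤ f y) :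
    ∀ i j, 1 / (2 * (1 - μ / L)) *
        ((1 / L) * ‖g i - g j‖ ^ 2 + μ * ‖x i - x j‖ ^ 2
          - (2 * μ / L) * ⟪g j - g i, x j - x i⟫)
      ≤ fv i - fv j - ⟪g j, x i - x j⟫ := by
  have hL : 0 < L := lt_of_le_of_lt hμ hμL
  set ℓ : ℝ := L - μ with hℓdef
  have hℓ : 0 < ℓ := by simp [hℓdef]; linarith
  set h : EuclideanSpace ℝ (Fin n) → ℝ := fun y => f y - μ / 2 * ‖y‖^2 with hh
  set s : I → EuclideanSpace ℝ (Fin n) := fun i => g i - μ • x i with hs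
  have fdesc : ∀ i z, f z ≤ f (x i) + ⟪g i, z - x i⟫ + L / 2 * ‖z - x i‖^2 :=
    fun i => descent_lemma (le_of_lt hL) hf2 (hsg i)
  have hdesc : ∀ i z, h z ≤ h (x i) + ⟪s i, z - x i⟫ + ℓ / 2 * ‖z - x i‖^2 := by
    intro i z
    have h1 := fdesc i z
    have hsi : s i = g i - μ • x i := rfl
    have h2 : ⟪s i, z - x i⟫ = ⟪g i, z - x i⟫ - μ * ⟪x i, z - x i⟫ := by
      rw [hsi, inner_sub_left, real_inner_smul_left]
    have h3 := norm_sq_expand (x i) z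
    simp only [hh]
    rw [h2, h3]
    linarith
  have hsub : ∀ i z, h (x i) + ⟪s i, z - x i⟫ ≤ h z := by
    intro i
    exact subgrad_of_upper hf1 (x i) (s i) (ℓ/2) (by linarith) (hdesc i)
  have key : ∀ i j, ‖s i - s j‖^2 / (2*ℓ) ≤ h (x i) - h (x j) - ⟪s j, x i - x j⟫ := by
    intro i j
    set z : EuclideanSpace ℝ (Fin n) := x i - ℓ⁻¹ • (s i - s j) with hz
    have h1 := hsub j z
    have h2 := hdesc i z
    have e1 : z - x i = -(ℓ⁻¹ • (s i - s j)) := by simp [hz]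
    have e2 : z - x j = (x i - x j) - ℓ⁻¹ • (s i - s j) := by simp [hz]; module
    have e3 : ⟪s j, z - x j⟫ = ⟪s j, x i - x j⟫ - ℓ⁻¹ * ⟪s j, s i - s j⟫ := by
      rw [e2, inner_sub_right, real_inner_smul_right]
    have e4 : ⟪s i, z - x i⟫ = -(ℓ⁻¹ * ⟪s i, s i - s j⟫) := by
      rw [e1, inner_neg_right, real_inner_smul_right]
    have e5 : ‖z - x i‖^2 = ℓ⁻¹^2 * ‖s i - s j‖^2 := by
      rw [e1, norm_neg, norm_smul, mul_pow, Real.norm_eq_abs, sq_abs]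
    have e6 : ⟪s i, s i - s j⟫ - ⟪s j, s i - s j⟫ = ‖s i - s j‖^2 := by
      rw [← inner_sub_left, real_inner_self_eq_norm_sq]
    rw [e3] at h1
    rw [e4, e5] at h2
    have hℓne : ℓ ≠ 0 := ne_of_gt hℓ
    have : h (x j) + ⟪s j, x i - x j⟫ - ℓ⁻¹ * ⟪s j, s i - s j⟫ ≤
        h (x i) - ℓ⁻¹ * ⟪s i, s i - s j⟫ + ℓ/2 * (ℓ⁻¹^2 * ‖s i - s j‖^2) := by
      linarith
    have hv : ℓ/2 * (ℓ⁻¹^2 * ‖s i - s j‖^2) = ℓ⁻¹ * ‖s i - s j‖^2 / 2 := by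
      field_simp
    have hgoal : ‖s i - s j‖^2 / (2*ℓ) = ℓ⁻¹ * ‖s i - s j‖^2 / 2 := by
      rw [inv_mul_eq_div, div_div, mul_comm]
    have e6' : ℓ⁻¹ * ⟪s i, s i - s j⟫ - ℓ⁻¹ * ⟪s j, s i - s j⟫ = ℓ⁻¹ * ‖s i - s j‖^2 := by
      rw [← mul_sub, e6]
    rw [hv] at this
    rw [hgoal]
    linarith
  intro i j
  have hk := key i j
  have e1 : ‖s i - s j‖^2 = ‖g i - g j‖^2 - 2*μ*⟪g i - g j, x i - x j⟫ + μ^2*‖x i - x j‖^2 := by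
    have : s i - s j = (g i - g j) - μ • (x i - x j) := by simp [hs]; module
    rw [this, norm_sub_sq_real, real_inner_smul_right, norm_smul, mul_pow,
      Real.norm_eq_abs, sq_abs]
    ring
  have e2 : h (x i) - h (x j) - ⟪s j, x i - x j⟫
      = fv i - fv j - ⟪g j, x i - x j⟫ - μ/2 * ‖x i - x j‖^2 := by
    have hn := norm_sq_expand (x j) (x i)
    have hsj : s j = g j - μ • x j := rfl
    have h2 : ⟪s j, x i - x j⟫ = ⟪g j, x i - x j⟫ - μ * ⟪x j, x i - x j⟫ := by
      rw [hsj, inner_sub_left, real_inner_smul_left]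
    simp only [hh]
    rw [h2, hfv i, hfv j, hn]
    ring
  have e3 : ⟪g j - g i, x j - x i⟫ = ⟪g i - g j, x i - x j⟫ := by
    have h1 : g j - g i = -(g i - g j) := by module
    rw [h1]
    have h2 : x j - x i = -(x i - x j) := by module
    rw [h2, inner_neg_neg]
  rw [e3]
  rw [e1, e2] at hk
  have hLne : L ≠ 0 := ne_of_gt hL
  have hℓne : ℓ ≠ 0 := ne_of_gt hℓ
  have hfrac : 1 - μ / L = ℓ / L := by field_simp; exact hℓdef.symm
  have idd : 1 / (2 * (1 - μ / L)) *
        ((1 / L) * ‖g i - g j‖ ^ 2 + μ * ‖x i - x j‖ ^ 2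
          - (2 * μ / L) * ⟪g i - g j, x i - x j⟫)
      = (‖g i - g j‖^2 - 2*μ*⟪g i - g j, x i - x j⟫ + μ^2*‖x i - x j‖^2) / (2*ℓ)
        + μ/2 * ‖x i - x j‖^2 := by
    rw [hfrac]
    field_simp
    ring
  linarith [idd, hk]

end AuxLemmas

/-- Interpolation conditions for the class `F_{μ,L}(ℝⁿ)` (Taylor–Hendrickx–Glineur). -/
theorem fmuL_interpolation
    (n : ℕ) (hn : 0 < n)
    (μ L : ℝ) (hμ : 0 ≤ μ) (hμL : μ < L)
    (I : Type) [Fintype I]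
    (x g : I → EuclideanSpace ℝ (Fin n)) (fv : I → ℝ) :
    (∃ f : EuclideanSpace ℝ (Fin n) → ℝ, MemFClass μ L f ∧
        ∀ i, f (x i) = fv i ∧ SubgradAt f (g i) (x i)) ↔
    (∀ i j, 1 / (2 * (1 - μ / L)) *
        ((1 / L) * ‖g i - g j‖ ^ 2 + μ * ‖x i - x j‖ ^ 2
          - (2 * μ / L) * (inner ℝ (g j - g i) (x j - x i) : ℝ))
      ≤ fv i - fv j - (inner ℝ (g j) (x i - x j) : ℝ)) := by
  have hL : 0 < L := lt_of_le_of_lt hμ hμL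
  have hℓ : 0 < L - μ := by linarith
  constructor
  · rintro ⟨f, ⟨hf1, hf2⟩, hint⟩
    exact necessity μ L hμ hμL I x g fv f hf1 hf2 (fun i => (hint i).1) (fun i => (hint i).2)
  · intro hcond
    by_cases hI : Nonempty I
    · haveI := hI
      -- convert the conditions to the smooth convex ones
      have cond : ∀ i j, ‖(g i - μ • x i) - (g j - μ • x j)‖^2 ≤
          2*(L - μ)*((fv i - μ/2*‖x i‖^2) - (fv j - μ/2*‖x j‖^2)
            - ⟪g j - μ • x j, x i - x j⟫) := by
        intro i j
        have hst := hcond i j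
        have e3 : (inner ℝ (g j - g i) (x j - x i) : ℝ) = ⟪g i - g j, x i - x j⟫ := by
          have h1 : g j - g i = -(g i - g j) := by module
          rw [h1]
          have h2 : x j - x i = -(x i - x j) := by module
          rw [h2, inner_neg_neg]
        rw [e3] at hst
        have e1 : ‖(g i - μ • x i) - (g j - μ • x j)‖^2
            = ‖g i - g j‖^2 - 2*μ*⟪g i - g j, x i - x j⟫ + μ^2*‖x i - x j‖^2 := by
          have hh : (g i - μ • x i) - (g j - μ • x j) = (g i - g j) - μ • (x i - x j) := by
            module
          rw [hh, norm_sub_sq_real, real_inner_smul_right, norm_smul, mul_pow,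
            Real.norm_eq_abs, sq_abs]
          ring
        have e2 : (fv i - μ/2*‖x i‖^2) - (fv j - μ/2*‖x j‖^2) - ⟪g j - μ • x j, x i - x j⟫
            = fv i - fv j - ⟪g j, x i - x j⟫ - μ/2 * ‖x i - x j‖^2 := by
          have hn := norm_sq_expand (x j) (x i)
          rw [inner_sub_left, real_inner_smul_left, hn]
          ring
        have hLne : L ≠ 0 := ne_of_gt hL
        have hℓne : L - μ ≠ 0 := ne_of_gt hℓ
        have hfrac : 1 - μ / L = (L - μ) / L := by field_simp
        have idd : 1 / (2 * (1 - μ / L)) *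
              ((1 / L) * ‖g i - g j‖ ^ 2 + μ * ‖x i - x j‖ ^ 2
                - (2 * μ / L) * ⟪g i - g j, x i - x j⟫)
            = (‖g i - g j‖^2 - 2*μ*⟪g i - g j, x i - x j⟫ + μ^2*‖x i - x j‖^2) / (2*(L - μ))
              + μ/2 * ‖x i - x j‖^2 := by
          rw [hfrac]
          field_simp
          ring
        rw [e1, e2]
        have h2l : (0:ℝ) < 2*(L - μ) := by linarith
        have hdiv : (‖g i - g j‖^2 - 2*μ*⟪g i - g j, x i - x j⟫ + μ^2*‖x i - x j‖^2)
            / (2*(L - μ)) ≤ fv i - fv j - ⟪g j, x i - x j⟫ - μ/2 * ‖x i - x j‖^2 := by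
          linarith [idd, hst]
        rw [div_le_iff₀ h2l] at hdiv
        linarith [hdiv]
      obtain ⟨f, fconv, fsmooth, hprop⟩ := sufficiency_smooth (L - μ) hℓ I x
        (fun i => g i - μ • x i) (fun i => fv i - μ/2*‖x i‖^2) cond
      refine ⟨fun y => μ/2*‖y‖^2 + f y, ⟨?_, ?_⟩, fun i => ⟨?_, ?_⟩⟩
      · convert fconv using 1
        funext y
        simp only []
        ring
      · convert fsmooth using 1
        funext y
        simp only []
        ring
      · have := (hprop i).1
        simp only [this]
        ring
      · intro y
        have h1 := (hprop i).2 y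
        have h2 := (hprop i).1
        rw [h2] at h1
        have hgs : (inner ℝ (g i) (y - x i) : ℝ)
            = ⟪g i - μ • x i, y - x i⟫ + μ * ⟪x i, y - x i⟫ := by
          rw [inner_sub_left, real_inner_smul_left]
          ring
        have hn := norm_sq_expand (x i) y
        have hnn : 0 ≤ μ * ‖y - x i‖^2 := mul_nonneg hμ (sq_nonneg _)
        show μ/2*‖x i‖^2 + f (x i) + (inner ℝ (g i) (y - x i) : ℝ) ≤ μ/2*‖y‖^2 + f y
        rw [hgs, h2, hn]
        linarith
    · haveI : IsEmpty I := not_nonempty_iff.mp hI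
      refine ⟨fun y => μ/2*‖y‖^2, ⟨?_, ?_⟩, fun i => isEmptyElim i⟩
      · have he : (fun y : EuclideanSpace ℝ (Fin n) => μ/2*‖y‖^2 - μ / 2 * ‖y‖^2)
            = (fun _ => (0:ℝ)) := by
          funext y; ring
        rw [he]
        exact convexOn_const 0 convex_univ
      · have he : (fun y : EuclideanSpace ℝ (Fin n) => L / 2 * ‖y‖^2 - μ/2*‖y‖^2)
            = (fun y => (L - μ)/2*‖y‖^2) := by
          funext y; ring
        rw [he]
        exact convexOn_normsq _ (by linarith)
end

section
/- Let n be a positive integer, let 0 ≤ μ < L < ∞, and let 0 < α ≤ min{1, 2μ/L}. Let f₁, f₂ ∈ F_{μ,L}(ℝⁿ), f := f₁ − f₂, and let x¹, x², x³, … and y¹, y², … in ℝⁿ with subgradients g₁(xᵏ) ∈ ∂f₁(xᵏ) and g₂(xᵏ) ∈ ∂f₂(xᵏ) be generated by boosted DCA: g₂(xᵏ) ∈ ∂f₁(yᵏ) and x^{k+1} = yᵏ + α(yᵏ − xᵏ) for each k ≥ 1. Then for every integer k ≥ 2, f(xᵏ) + (1/L)(1/2 + αμ/L)‖g₁(x¹)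 − g₂(x¹)‖² + Σ_{i=2}^{k−1} (1/L)(1 + αμ/L)‖g₁(xⁱ) − g₂(xⁱ)‖² + (1/(2L))‖g₁(xᵏ) − g₂(xᵏ)‖² ≤ f(x¹), with the convention that the sum is empty (zero) when k = 2. -/
set_option maxHeartbeats 2000000

open RealInnerProductSpace

variable {E : Type*} [NormedAddCommGroup E] [InnerProductSpace ℝ E]

/-- Strong convexity lower bound from convexity of `f - c/2 ‖·‖²` and a plain subgradient. -/
lemma sc_lower {f : E → ℝ} {c : ℝ} (hc : 0 ≤ c)
    (hconv : ConvexOn ℝ Set.univ (fun z => f z - c / 2 * ‖z‖ ^ 2))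
    {g x : E} (hg : ∀ u, f x + ⟪g, u - x⟫ ≤ f u) (u : E) :
    f x + ⟪g, u - x⟫ + c / 2 * ‖u - x‖ ^ 2 ≤ f u := by
  have h3 : ‖u‖ ^ 2 = ‖x‖ ^ 2 + 2 * ⟪x, u - x⟫ + ‖u - x‖ ^ 2 := by
    have hu : u = x + (u - x) := by abel
    nth_rewrite 1 [hu]
    rw [norm_add_sq_real]
  have key : ∀ t : ℝ, 0 < t → t < 1 →
      ⟪g, u - x⟫ + c * (1 - t) / 2 * ‖u - x‖ ^ 2 ≤ f u - f x := by
    intro t ht0 ht1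
    have hcv := hconv.2 (Set.mem_univ x) (Set.mem_univ u)
      (by linarith : (0:ℝ) ≤ 1 - t) ht0.le (by ring)
    simp only [smul_eq_mul] at hcv
    have hpt : (1 - t) • x + t • u = x + t • (u - x) := by module
    rw [hpt] at hcv
    have hsub := hg (x + t • (u - x))
    have h1 : ⟪g, (x + t • (u - x)) - x⟫ = t * ⟪g, u - x⟫ := by
      rw [add_sub_cancel_left, real_inner_smul_right]
    rw [h1] at hsub
    have h2 : ‖x + t • (u - x)‖ ^ 2
        = ‖x‖ ^ 2 + 2 * (t * ⟪x, u - x⟫) + t ^ 2 * ‖u - x‖ ^ 2 := by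
      rw [norm_add_sq_real, real_inner_smul_right, norm_smul, Real.norm_eq_abs,
        mul_pow, sq_abs]
    rw [h2, h3] at hcv
    have hmul : t * (⟪g, u - x⟫ + c * (1 - t) / 2 * ‖u - x‖ ^ 2 - (f u - f x)) ≤ t * 0 := by
      nlinarith [hcv, hsub]
    have := le_of_mul_le_mul_left hmul ht0
    linarith
  by_contra hcon
  push_neg at hcon
  set P := f u - f x - ⟪g, u - x⟫ - c / 2 * ‖u - x‖ ^ 2 with hP
  have hPneg : P < 0 := by simp only [hP]; linarith
  set K := c / 2 * ‖u - x‖ ^ 2 with hK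
  have hK0 : 0 ≤ K := by positivity
  set t := min (1/2) ((-P) / (K + 1)) with ht
  have ht0 : 0 < t := by
    apply lt_min (by norm_num)
    apply div_pos (by linarith) (by linarith)
  have ht1 : t < 1 := lt_of_le_of_lt (min_le_left _ _) (by norm_num)
  have h4 := key t ht0 ht1
  have h5 : t ≤ (-P) / (K + 1) := min_le_right _ _
  have h6 : t * (K + 1) ≤ -P := by
    rw [← le_div_iff₀ (by positivity)]
    exact h5
  -- P ≥ -t*K from h4
  have h7 : -(t * K) ≤ P := by
    simp only [hP, hK]
    nlinarith [h4]
  nlinarith [h6, h7, ht0, hK0]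

/-- Smoothness upper bound from convexity of `c/2 ‖·‖² - f` and a plain subgradient. -/
lemma smooth_upper {f : E → ℝ} {c : ℝ} (hc : 0 ≤ c)
    (hconv : ConvexOn ℝ Set.univ (fun z => c / 2 * ‖z‖ ^ 2 - f z))
    {g x : E} (hg : ∀ u, f x + ⟪g, u - x⟫ ≤ f u) (u : E) :
    f u ≤ f x + ⟪g, u - x⟫ + c / 2 * ‖u - x‖ ^ 2 := by
  have h3 : ‖u‖ ^ 2 = ‖x‖ ^ 2 + 2 * ⟪x, u - x⟫ + ‖u - x‖ ^ 2 := by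
    have hu : u = x + (u - x) := by abel
    nth_rewrite 1 [hu]
    rw [norm_add_sq_real]
  have key : ∀ t : ℝ, 0 < t → t ≤ 1 →
      f u ≤ f x + ⟪g, u - x⟫ + c * (1 + t) / 2 * ‖u - x‖ ^ 2 := by
    intro t ht0 ht1
    have h1t : (0:ℝ) < 1 + t := by linarith
    set p := x + (-t) • (u - x) with hp
    have hcomb : (1 / (1 + t)) • p + (t / (1 + t)) • u = x := by
      rw [hp]
      match_scalars <;> field_simp <;> ring
    have hcv := hconv.2 (Set.mem_univ p) (Set.mem_univ u)
      (by positivity : (0:ℝ) ≤ 1 / (1 + t)) (by positivity : (0:ℝ) ≤ t / (1 + t))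
      (by field_simp)
    simp only [smul_eq_mul] at hcv
    rw [hcomb] at hcv
    have hQt : (1 + t) * (c / 2 * ‖x‖ ^ 2 - f x)
        ≤ (c / 2 * ‖p‖ ^ 2 - f p) + t * (c / 2 * ‖u‖ ^ 2 - f u) := by
      have h2 := mul_le_mul_of_nonneg_left hcv h1t.le
      have h4 : (1 + t) * (1 / (1 + t) * (c / 2 * ‖p‖ ^ 2 - f p)
          + t / (1 + t) * (c / 2 * ‖u‖ ^ 2 - f u))
          = (c / 2 * ‖p‖ ^ 2 - f p) + t * (c / 2 * ‖u‖ ^ 2 - f u) := by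
        field_simp
      rw [h4] at h2
      exact h2
    have hsub := hg p
    have h5 : ⟪g, p - x⟫ = -t * ⟪g, u - x⟫ := by
      rw [hp, add_sub_cancel_left, real_inner_smul_right]
    rw [h5] at hsub
    have h6 : ‖p‖ ^ 2 = ‖x‖ ^ 2 + 2 * (-t * ⟪x, u - x⟫) + t ^ 2 * ‖u - x‖ ^ 2 := by
      rw [hp, norm_add_sq_real, real_inner_smul_right, norm_smul, Real.norm_eq_abs,
        mul_pow, sq_abs]
      ring
    rw [h6, h3] at hQt
    have hmul : t * (f u - (f x + ⟪g, u - x⟫ + c * (1 + t) / 2 * ‖u - x‖ ^ 2)) ≤ t * 0 := by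
      nlinarith [hQt, hsub]
    have := le_of_mul_le_mul_left hmul ht0
    linarith
  by_contra hcon
  push_neg at hcon
  set R := f u - f x - ⟪g, u - x⟫ - c / 2 * ‖u - x‖ ^ 2 with hR
  have hRpos : 0 < R := by simp only [hR]; linarith
  set K := c / 2 * ‖u - x‖ ^ 2 with hK
  have hK0 : 0 ≤ K := by positivity
  set t := min 1 (R / (K + 1)) with ht
  have ht0 : 0 < t := lt_min one_pos (by positivity)
  have ht1 : t ≤ 1 := min_le_left _ _
  have h4 := key t ht0 ht1
  have h6 : t * (K + 1) ≤ R := by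
    rw [← le_div_iff₀ (by positivity)]
    exact min_le_right _ _
  have h7 : R ≤ t * K := by
    simp only [hR, hK]
    nlinarith [h4]
  nlinarith [h6, h7, ht0, hK0]

/-- Interpolation inequality for the class `F_{μ,L}`, in cleared form. -/
lemma interp {n : ℕ} {μ L : ℝ} (hμ : 0 ≤ μ) (hμL : μ < L)
    {f : EuclideanSpace ℝ (Fin n) → ℝ} (hf : MemFClass μ L f)
    {gx gy x y : EuclideanSpace ℝ (Fin n)} (hgx : SubgradAt f gx x) (hgy : SubgradAt f gy y) :
    ‖gx - gy - μ • (x - y)‖ ^ 2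
      ≤ 2 * (L - μ) * (f x - f y - ⟪gy, x - y⟫ - μ / 2 * ‖x - y‖ ^ 2) := by
  have hL : 0 < L - μ := by linarith
  have hL0 : (0:ℝ) ≤ L := by linarith
  set G := gx - gy - μ • (x - y) with hG
  set c : ℝ := 1 / (L - μ) with hc
  have hc0 : (0:ℝ) ≤ c := by positivity
  set u₀ := x - c • G with hu
  have h1 := sc_lower hμ hf.1 hgy u₀
  have h2 := smooth_upper hL0 hf.2 hgx u₀
  have hvy : u₀ - y = (x - y) - c • G := by rw [hu]; abel
  have hvx : u₀ - x = -(c • G) := by rw [hu]; abel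
  have e1 : ⟪gy, u₀ - y⟫ = ⟪gy, x - y⟫ - c * ⟪gy, G⟫ := by
    rw [hvy, inner_sub_right, real_inner_smul_right]
  have e2 : ‖u₀ - y‖ ^ 2 = ‖x - y‖ ^ 2 - 2 * (c * ⟪x - y, G⟫) + c ^ 2 * ‖G‖ ^ 2 := by
    rw [hvy, norm_sub_sq_real, real_inner_smul_right, norm_smul, Real.norm_eq_abs,
      mul_pow, sq_abs]
  have e3 : ⟪gx, u₀ - x⟫ = -(c * ⟪gx, G⟫) := by
    rw [hvx, inner_neg_right, real_inner_smul_right]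
  have e4 : ‖u₀ - x‖ ^ 2 = c ^ 2 * ‖G‖ ^ 2 := by
    rw [hvx, norm_neg, norm_smul, Real.norm_eq_abs, mul_pow, sq_abs]
  have e5 : ⟪gx, G⟫ = ‖G‖ ^ 2 + ⟪gy, G⟫ + μ * ⟪x - y, G⟫ := by
    have : ⟪G, G⟫ = ⟪gx, G⟫ - ⟪gy, G⟫ - μ * ⟪x - y, G⟫ := by
      rw [hG, inner_sub_left, inner_sub_left, real_inner_smul_left]
    have hnorm : ⟪G, G⟫ = ‖G‖ ^ 2 := real_inner_self_eq_norm_sq G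
    linarith
  rw [e1, e2] at h1
  rw [e3, e4, e5] at h2
  have h6 : c * ‖G‖ ^ 2 - (L - μ) * c ^ 2 / 2 * ‖G‖ ^ 2
      ≤ f x - f y - ⟪gy, x - y⟫ - μ / 2 * ‖x - y‖ ^ 2 := by nlinarith [h1, h2]
  have h7 := mul_le_mul_of_nonneg_left h6 (by linarith : (0:ℝ) ≤ 2 * (L - μ))
  have h8 : 2 * (L - μ) * (c * ‖G‖ ^ 2 - (L - μ) * c ^ 2 / 2 * ‖G‖ ^ 2) = ‖G‖ ^ 2 := by
    rw [hc]; field_simp; ring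
  linarith [h7, h8.ge, h8.le]

set_option maxHeartbeats 4000000 in
lemma key_scalar (mu L al a11 a12 a22 a23 a24 a33 a34 a44 b1 b2 b3 b4 dd F1X F1Y F1P F2X F2P : ℝ)
    (hmu : 0 < mu) (hL : mu < L) (ha0 : 0 < al) (ha1 : al ≤ 1) (ha2 : al * L ≤ 2 * mu)
    (hE1 : 0 ≤ 2*(L-mu)*(F1X - F1Y + b2 - mu/2*dd) - (a11 - 2*a12 + a22 + 2*mu*(b1-b2) + mu^2*dd)) (hE2 : 0 ≤ 2*(L-mu)*(F1Y - F1X - b1 - mu/2*dd) - (a11 - 2*a12 + a22 - 2*mu*(b2-b1) + mu^2*dd)) (hE3 : 0 ≤ 2*(L-mu)*(F1Y - F1P + al*b3 - mu*al^2/2*dd) - (a22 - 2*a23 + a33 + 2*mu*al*(b2-b3) + mu^2*al^2*dd)) (hE4 : 0 ≤ 2*(L-mu)*(F1P - F1Y - al*b2 - mu*al^2/2*dd) - (a33 - 2*a23 + a22 - 2*mu*al*(b3-b2) + mu^2*al^2*dd)) (hE5 : 0 ≤ 2*(L-mu)*(F2P - F2X - (1+al)*b2 - mu*(1+al)^2/2*dd)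 - (a44 - 2*a24 + a22 - 2*mu*(1+al)*(b4-b2) + mu^2*(1+al)^2*dd))
    (hq1 : 0 ≤ a11 - 2*a12 + a22 + 2*L*(b1-b2) + L^2*dd)
    (hq2 : 0 ≤ mu^2*a44 + (L-mu)^2*a33 + L^2*a22 + mu^2*L^2*(1+al)^2*dd + 2*mu*(L-mu)*a34 - 2*mu*L*a24 - 2*(L-mu)*L*a23 - 2*mu^2*L*(1+al)*b4 - 2*(L-mu)*mu*L*(1+al)*b3 + 2*mu*L^2*(1+al)*b2)
    (hq3 : 0 ≤ a33 - 2*a23 + a22 - 2*al*mu*(b3-b2) + al^2*mu^2*dd) :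
    F1P - F2P + (1/(2*L) + al*mu/L^2) * (a11 - 2*a12 + a22) + (1/(2*L)) * (a33 - 2*a34 + a44)
      ≤ F1X - F2X := by
  have hL0 : (0:ℝ) < L := by linarith
  have key : 2*(L-mu)*L^2*al*mu*((F1X - F2X) - (F1P - F2P)) - ((L-mu)*L*al*mu + 2*(L-mu)*al^2*mu^2)*(a11 - 2*a12 + a22) - (L-mu)*L*al*mu*(a33 - 2*a34 + a44)
      = (L^2*al*mu + 2*al^2*mu^2*L)*(2*(L-mu)*(F1X - F1Y + b2 - mu/2*dd) - (a11 - 2*a12 + a22 + 2*mu*(b1-b2) + mu^2*dd)) + (2*al^2*mu^2*L)*(2*(L-mu)*(F1Y - F1X - b1 - mu/2*dd) - (a11 - 2*a12 + a22 - 2*mu*(b2-b1) + mu^2*dd)) + (L^2*mu)*(2*(L-mu)*(F1Y - F1P + al*b3 - mu*al^2/2*dd) - (a22 - 2*a23 + a33 + 2*mu*al*(b2-b3) + mu^2*al^2*dd)) + (L^2*mu*(1-al))*(2*(L-mu)*(F1P - F1Y - al*b2 - mu*al^2/2*dd) - (a33 - 2*a23 + a22 - 2*mu*al*(b3-b2)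 + mu^2*al^2*dd)) + (L^2*al*mu)*(2*(L-mu)*(F2P - F2X - (1+al)*b2 - mu*(1+al)^2/2*dd) - (a44 - 2*a24 + a22 - 2*mu*(1+al)*(b4-b2) + mu^2*(1+al)^2*dd)) + (al*mu^2*(L+2*al*L+2*al*mu))*(a11 - 2*a12 + a22 + 2*L*(b1-b2) + L^2*dd) + (L*al)*(mu^2*a44 + (L-mu)^2*a33 + L^2*a22 + mu^2*L^2*(1+al)^2*dd + 2*mu*(L-mu)*a34 - 2*mu*L*a24 - 2*(L-mu)*L*a23 - 2*mu^2*L*(1+al)*b4 - 2*(L-mu)*mu*L*(1+al)*b3 + 2*mu*L^2*(1+al)*b2) + (L^2*(2*mu-al*L))*(a33 - 2*a23 + a22 - 2*al*mu*(b3-b2) + al^2*mu^2*dd) := by ring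
  have hsum : (0:ℝ) ≤ (L^2*al*mu + 2*al^2*mu^2*L)*(2*(L-mu)*(F1X - F1Y + b2 - mu/2*dd) - (a11 - 2*a12 + a22 + 2*mu*(b1-b2) + mu^2*dd)) + (2*al^2*mu^2*L)*(2*(L-mu)*(F1Y - F1X - b1 - mu/2*dd) - (a11 - 2*a12 + a22 - 2*mu*(b2-b1) + mu^2*dd)) + (L^2*mu)*(2*(L-mu)*(F1Y - F1P + al*b3 - mu*al^2/2*dd) - (a22 - 2*a23 + a33 + 2*mu*al*(b2-b3) + mu^2*al^2*dd)) + (L^2*mu*(1-al))*(2*(L-mu)*(F1P - F1Y - al*b2 - mu*al^2/2*dd) - (a33 - 2*a23 + a22 - 2*mu*al*(b3-b2) + mu^2*al^2*dd)) + (L^2*al*mu)*(2*(L-mu)*(F2P - F2X - (1+al)*b2 - mu*(1+al)^2/2*dd) - (a44 - 2*a24 + a22 - 2*mu*(1+al)*(b4-b2) + mu^2*(1+al)^2*dd)) + (al*mu^2*(L+2*al*L+2*al*mu))*(a11 - 2*a12 + a22 + 2*L*(b1-b2) + L^2*dd) + (L*al)*(mu^2*a44 + (L-mu)^2*a33 +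 L^2*a22 + mu^2*L^2*(1+al)^2*dd + 2*mu*(L-mu)*a34 - 2*mu*L*a24 - 2*(L-mu)*L*a23 - 2*mu^2*L*(1+al)*b4 - 2*(L-mu)*mu*L*(1+al)*b3 + 2*mu*L^2*(1+al)*b2) + (L^2*(2*mu-al*L))*(a33 - 2*a23 + a22 - 2*al*mu*(b3-b2) + al^2*mu^2*dd) := by
    have c1 : (0:ℝ) ≤ (L^2*al*mu + 2*al^2*mu^2*L) := by positivity
    have c2 : (0:ℝ) ≤ (2*al^2*mu^2*L) := by positivity
    have c3 : (0:ℝ) ≤ (L^2*mu) := by positivity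
    have c4 : (0:ℝ) ≤ (L^2*mu*(1-al)) := by nlinarith
    have c5 : (0:ℝ) ≤ (L^2*al*mu) := by positivity
    have d1 : (0:ℝ) ≤ (al*mu^2*(L+2*al*L+2*al*mu)) := by positivity
    have d2 : (0:ℝ) ≤ (L*al) := by positivity
    have d3 : (0:ℝ) ≤ (L^2*(2*mu-al*L)) := by nlinarith
    have t1 := mul_nonneg c1 hE1
    have t2 := mul_nonneg c2 hE2
    have t3 := mul_nonneg c3 hE3
    have t4 := mul_nonneg c4 hE4
    have t5 := mul_nonneg c5 hE5
    have s1 := mul_nonneg d1 hq1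
    have s2 := mul_nonneg d2 hq2
    have s3 := mul_nonneg d3 hq3
    linarith
  have hpos : (0:ℝ) < 2*(L-mu)*L^2*al*mu := by
    have : (0:ℝ) < L - mu := by linarith
    positivity
  have h9 : 2*(L-mu)*L^2*al*mu*((F1X - F2X) - (F1P - F2P)) - ((L-mu)*L*al*mu + 2*(L-mu)*al^2*mu^2)*(a11 - 2*a12 + a22) - (L-mu)*L*al*mu*(a33 - 2*a34 + a44)
      = (2*(L-mu)*L^2*al*mu) * ((F1X - F2X) - (F1P - F2P + (1/(2*L) + al*mu/L^2) * (a11 - 2*a12 + a22) + (1/(2*L)) * (a33 - 2*a34 + a44))) := by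
    field_simp
    ring
  by_contra hcon
  push_neg at hcon
  have hneg : (2*(L-mu)*L^2*al*mu) * ((F1X - F2X) - (F1P - F2P + (1/(2*L) + al*mu/L^2) * (a11 - 2*a12 + a22) + (1/(2*L)) * (a33 - 2*a34 + a44))) < 0 :=
    mul_neg_of_pos_of_neg hpos (by linarith)
  rw [← key, h9] at hsum
  linarith

lemma step {n : ℕ} {μ L α : ℝ} (hμ : 0 < μ) (hμL : μ < L) (hα0 : 0 < α)
    (hα1 : α ≤ 1) (hα2 : α * L ≤ 2 * μ)
    {f₁ f₂ : EuclideanSpace ℝ (Fin n) → ℝ} (hf₁ : MemFClass μ L f₁) (hf₂ : MemFClass μ L f₂)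
    {X Y P G1 G2 G3 G4 : EuclideanSpace ℝ (Fin n)}
    (hG1 : SubgradAt f₁ G1 X) (hG2 : SubgradAt f₂ G2 X) (hYsub : SubgradAt f₁ G2 Y)
    (hG3 : SubgradAt f₁ G3 P) (hG4 : SubgradAt f₂ G4 P)
    (hP : P = Y + α • (Y - X)) :
    f₁ P - f₂ P + (1/(2*L) + α*μ/L^2) * ‖G1 - G2‖^2 + (1/(2*L)) * ‖G3 - G4‖^2
      ≤ f₁ X - f₂ X := by
  obtain ⟨d, hdd⟩ : ∃ d, d = Y - X := ⟨Y - X, rfl⟩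
  have hd1 : X - Y = -d := by rw [hdd]; abel
  have hd2 : Y - P = -(α • d) := by rw [hdd, hP]; abel
  have hd3 : P - Y = α • d := by rw [hdd, hP]; abel
  have hd4 : P - X = (1+α) • d := by rw [hdd, hP]; module
  have I1 := interp hμ.le hμL hf₁ hG1 hYsub
  have I2 := interp hμ.le hμL hf₁ hYsub hG1
  have I3 := interp hμ.le hμL hf₁ hYsub hG3
  have I4 := interp hμ.le hμL hf₁ hG3 hYsub
  have I5 := interp hμ.le hμL hf₂ hG4 hG2
  have hA1 : ‖G1 - G2 - μ • (X - Y)‖^2 = ⟪G1, G1⟫ - 2*⟪G1, G2⟫ + ⟪G2, G2⟫ + 2*μ*(⟪G1, d⟫-⟪G2, d⟫) + μ^2*⟪d, d⟫ := by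
    rw [hd1, ← real_inner_self_eq_norm_sq]; simp only [smul_neg, neg_neg, sub_neg_eq_add, smul_smul, inner_add_left, inner_add_right, inner_sub_left, inner_sub_right, inner_neg_left, inner_neg_right, real_inner_smul_left, real_inner_smul_right, real_inner_comm G2 G1, real_inner_comm G3 G1, real_inner_comm G3 G2, real_inner_comm G4 G1, real_inner_comm G4 G2, real_inner_comm G4 G3, real_inner_comm d G1, real_inner_comm d G2, real_inner_comm d G3, real_inner_comm d G4]; ring
  have hA2 : ‖G2 - G1 - μ • (Y - X)‖^2 = ⟪G1, G1⟫ - 2*⟪G1, G2⟫ + ⟪G2, G2⟫ - 2*μ*(⟪G2, d⟫-⟪G1, d⟫) + μ^2*⟪d, d⟫ := by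
    rw [← hdd, ← real_inner_self_eq_norm_sq]; simp only [smul_neg, neg_neg, sub_neg_eq_add, smul_smul, inner_add_left, inner_add_right, inner_sub_left, inner_sub_right, inner_neg_left, inner_neg_right, real_inner_smul_left, real_inner_smul_right, real_inner_comm G2 G1, real_inner_comm G3 G1, real_inner_comm G3 G2, real_inner_comm G4 G1, real_inner_comm G4 G2, real_inner_comm G4 G3, real_inner_comm d G1, real_inner_comm d G2, real_inner_comm d G3, real_inner_comm d G4]; ring
  have hA3 : ‖G2 - G3 - μ • (Y - P)‖^2 = ⟪G2, G2⟫ - 2*⟪G2, G3⟫ + ⟪G3, G3⟫ + 2*μ*α*(⟪G2, d⟫-⟪G3, d⟫) + μ^2*α^2*⟪d, d⟫ := by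
    rw [hd2, ← real_inner_self_eq_norm_sq]; simp only [smul_neg, neg_neg, sub_neg_eq_add, smul_smul, inner_add_left, inner_add_right, inner_sub_left, inner_sub_right, inner_neg_left, inner_neg_right, real_inner_smul_left, real_inner_smul_right, real_inner_comm G2 G1, real_inner_comm G3 G1, real_inner_comm G3 G2, real_inner_comm G4 G1, real_inner_comm G4 G2, real_inner_comm G4 G3, real_inner_comm d G1, real_inner_comm d G2, real_inner_comm d G3, real_inner_comm d G4]; ring
  have hA4 : ‖G3 - G2 - μ • (P - Y)‖^2 = ⟪G3, G3⟫ - 2*⟪G2, G3⟫ + ⟪G2, G2⟫ - 2*μ*α*(⟪G3, d⟫-⟪G2, d⟫) + μ^2*α^2*⟪d, d⟫ := by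
    rw [hd3, ← real_inner_self_eq_norm_sq]; simp only [smul_neg, neg_neg, sub_neg_eq_add, smul_smul, inner_add_left, inner_add_right, inner_sub_left, inner_sub_right, inner_neg_left, inner_neg_right, real_inner_smul_left, real_inner_smul_right, real_inner_comm G2 G1, real_inner_comm G3 G1, real_inner_comm G3 G2, real_inner_comm G4 G1, real_inner_comm G4 G2, real_inner_comm G4 G3, real_inner_comm d G1, real_inner_comm d G2, real_inner_comm d G3, real_inner_comm d G4]; ring
  have hA5 : ‖G4 - G2 - μ • (P - X)‖^2 = ⟪G4, G4⟫ - 2*⟪G2, G4⟫ + ⟪G2, G2⟫ - 2*μ*(1+α)*(⟪G4, d⟫-⟪G2, d⟫) + μ^2*(1+α)^2*⟪d, d⟫ := by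
    rw [hd4, ← real_inner_self_eq_norm_sq]; simp only [smul_neg, neg_neg, sub_neg_eq_add, smul_smul, inner_add_left, inner_add_right, inner_sub_left, inner_sub_right, inner_neg_left, inner_neg_right, real_inner_smul_left, real_inner_smul_right, real_inner_comm G2 G1, real_inner_comm G3 G1, real_inner_comm G3 G2, real_inner_comm G4 G1, real_inner_comm G4 G2, real_inner_comm G4 G3, real_inner_comm d G1, real_inner_comm d G2, real_inner_comm d G3, real_inner_comm d G4]; ring
  have hi1 : ⟪G2, X - Y⟫ = -⟪G2, d⟫ := by rw [hd1, inner_neg_right]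
  have hi2 : ⟪G1, Y - X⟫ = ⟪G1, d⟫ := by rw [← hdd]
  have hi3 : ⟪G3, Y - P⟫ = -(α * ⟪G3, d⟫) := by rw [hd2, inner_neg_right, real_inner_smul_right]
  have hi4 : ⟪G2, P - Y⟫ = α * ⟪G2, d⟫ := by rw [hd3, real_inner_smul_right]
  have hi5 : ⟪G2, P - X⟫ = (1+α) * ⟪G2, d⟫ := by rw [hd4, real_inner_smul_right]
  have hm1 : ‖X - Y‖^2 = ⟪d, d⟫ := by rw [hd1, norm_neg, ← real_inner_self_eq_norm_sq]
  have hm2 : ‖Y - X‖^2 = ⟪d, d⟫ := by rw [← hdd, ← real_inner_self_eq_norm_sq]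
  have hm3 : ‖Y - P‖^2 = α^2 * ⟪d, d⟫ := by
    rw [hd2, norm_neg, norm_smul, Real.norm_eq_abs, mul_pow, sq_abs, ← real_inner_self_eq_norm_sq]
  have hm4 : ‖P - Y‖^2 = α^2 * ⟪d, d⟫ := by
    rw [hd3, norm_smul, Real.norm_eq_abs, mul_pow, sq_abs, ← real_inner_self_eq_norm_sq]
  have hm5 : ‖P - X‖^2 = (1+α)^2 * ⟪d, d⟫ := by
    rw [hd4, norm_smul, Real.norm_eq_abs, mul_pow, sq_abs, ← real_inner_self_eq_norm_sq]
  rw [hA1, hi1, hm1] at I1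
  rw [hA2, hi2, hm2] at I2
  rw [hA3, hi3, hm3] at I3
  rw [hA4, hi4, hm4] at I4
  rw [hA5, hi5, hm5] at I5
  have hE1 : 0 ≤ 2*(L-μ)*(f₁ X - f₁ Y + ⟪G2, d⟫ - μ/2*⟪d, d⟫) - (⟪G1, G1⟫ - 2*⟪G1, G2⟫ + ⟪G2, G2⟫ + 2*μ*(⟪G1, d⟫-⟪G2, d⟫) + μ^2*⟪d, d⟫) := by linarith
  have hE2 : 0 ≤ 2*(L-μ)*(f₁ Y - f₁ X - ⟪G1, d⟫ - μ/2*⟪d, d⟫) - (⟪G1, G1⟫ - 2*⟪G1, G2⟫ + ⟪G2, G2⟫ - 2*μ*(⟪G2, d⟫-⟪G1, d⟫) + μ^2*⟪d, d⟫) := by linarith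
  have hE3 : 0 ≤ 2*(L-μ)*(f₁ Y - f₁ P + α*⟪G3, d⟫ - μ*α^2/2*⟪d, d⟫) - (⟪G2, G2⟫ - 2*⟪G2, G3⟫ + ⟪G3, G3⟫ + 2*μ*α*(⟪G2, d⟫-⟪G3, d⟫) + μ^2*α^2*⟪d, d⟫) := by linarith
  have hE4 : 0 ≤ 2*(L-μ)*(f₁ P - f₁ Y - α*⟪G2, d⟫ - μ*α^2/2*⟪d, d⟫) - (⟪G3, G3⟫ - 2*⟪G2, G3⟫ + ⟪G2, G2⟫ - 2*μ*α*(⟪G3, d⟫-⟪G2, d⟫) + μ^2*α^2*⟪d, d⟫) := by linarith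
  have hE5 : 0 ≤ 2*(L-μ)*(f₂ P - f₂ X - (1+α)*⟪G2, d⟫ - μ*(1+α)^2/2*⟪d, d⟫) - (⟪G4, G4⟫ - 2*⟪G2, G4⟫ + ⟪G2, G2⟫ - 2*μ*(1+α)*(⟪G4, d⟫-⟪G2, d⟫) + μ^2*(1+α)^2*⟪d, d⟫) := by linarith
  have hn1 : ‖G1 - G2 + L • d‖^2 = ⟪G1, G1⟫ - 2*⟪G1, G2⟫ + ⟪G2, G2⟫ + 2*L*(⟪G1, d⟫-⟪G2, d⟫) + L^2*⟪d, d⟫ := by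
    rw [← real_inner_self_eq_norm_sq]; simp only [smul_neg, neg_neg, sub_neg_eq_add, smul_smul, inner_add_left, inner_add_right, inner_sub_left, inner_sub_right, inner_neg_left, inner_neg_right, real_inner_smul_left, real_inner_smul_right, real_inner_comm G2 G1, real_inner_comm G3 G1, real_inner_comm G3 G2, real_inner_comm G4 G1, real_inner_comm G4 G2, real_inner_comm G4 G3, real_inner_comm d G1, real_inner_comm d G2, real_inner_comm d G3, real_inner_comm d G4]; ring
  have hn2 : ‖μ • G4 + (L-μ) • G3 - L • G2 - (μ*L*(1+α)) • d‖^2 = μ^2*⟪G4, G4⟫ + (L-μ)^2*⟪G3, G3⟫ + L^2*⟪G2, G2⟫ + μ^2*L^2*(1+α)^2*⟪d, d⟫ + 2*μ*(L-μ)*⟪G3, G4⟫ - 2*μ*L*⟪G2, G4⟫ - 2*(L-μ)*L*⟪G2, G3⟫ - 2*μ^2*L*(1+α)*⟪G4, d⟫ - 2*(L-μ)*μ*L*(1+α)*⟪G3, d⟫ + 2*μ*L^2*(1+α)*⟪G2, d⟫ := by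
    rw [← real_inner_self_eq_norm_sq]; simp only [smul_neg, neg_neg, sub_neg_eq_add, smul_smul, inner_add_left, inner_add_right, inner_sub_left, inner_sub_right, inner_neg_left, inner_neg_right, real_inner_smul_left, real_inner_smul_right, real_inner_comm G2 G1, real_inner_comm G3 G1, real_inner_comm G3 G2, real_inner_comm G4 G1, real_inner_comm G4 G2, real_inner_comm G4 G3, real_inner_comm d G1, real_inner_comm d G2, real_inner_comm d G3, real_inner_comm d G4]; ring
  have hn3 : ‖G3 - G2 - (α*μ) • d‖^2 = ⟪G3, G3⟫ - 2*⟪G2, G3⟫ + ⟪G2, G2⟫ - 2*α*μ*(⟪G3, d⟫-⟪G2, d⟫) + α^2*μ^2*⟪d, d⟫ := by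
    rw [← real_inner_self_eq_norm_sq]; simp only [smul_neg, neg_neg, sub_neg_eq_add, smul_smul, inner_add_left, inner_add_right, inner_sub_left, inner_sub_right, inner_neg_left, inner_neg_right, real_inner_smul_left, real_inner_smul_right, real_inner_comm G2 G1, real_inner_comm G3 G1, real_inner_comm G3 G2, real_inner_comm G4 G1, real_inner_comm G4 G2, real_inner_comm G4 G3, real_inner_comm d G1, real_inner_comm d G2, real_inner_comm d G3, real_inner_comm d G4]; ring
  have hq1 : 0 ≤ ⟪G1, G1⟫ - 2*⟪G1, G2⟫ + ⟪G2, G2⟫ + 2*L*(⟪G1, d⟫-⟪G2, d⟫) + L^2*⟪d, d⟫ := hn1 ▸ sq_nonneg _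
  have hq2 : 0 ≤ μ^2*⟪G4, G4⟫ + (L-μ)^2*⟪G3, G3⟫ + L^2*⟪G2, G2⟫ + μ^2*L^2*(1+α)^2*⟪d, d⟫ + 2*μ*(L-μ)*⟪G3, G4⟫ - 2*μ*L*⟪G2, G4⟫ - 2*(L-μ)*L*⟪G2, G3⟫ - 2*μ^2*L*(1+α)*⟪G4, d⟫ - 2*(L-μ)*μ*L*(1+α)*⟪G3, d⟫ + 2*μ*L^2*(1+α)*⟪G2, d⟫ := hn2 ▸ sq_nonneg _
  have hq3 : 0 ≤ ⟪G3, G3⟫ - 2*⟪G2, G3⟫ + ⟪G2, G2⟫ - 2*α*μ*(⟪G3, d⟫-⟪G2, d⟫) + α^2*μ^2*⟪d, d⟫ := hn3 ▸ sq_nonneg _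
  have nu : ‖G1 - G2‖^2 = ⟪G1, G1⟫ - 2*⟪G1, G2⟫ + ⟪G2, G2⟫ := by
    rw [← real_inner_self_eq_norm_sq]; simp only [smul_neg, neg_neg, sub_neg_eq_add, smul_smul, inner_add_left, inner_add_right, inner_sub_left, inner_sub_right, inner_neg_left, inner_neg_right, real_inner_smul_left, real_inner_smul_right, real_inner_comm G2 G1, real_inner_comm G3 G1, real_inner_comm G3 G2, real_inner_comm G4 G1, real_inner_comm G4 G2, real_inner_comm G4 G3, real_inner_comm d G1, real_inner_comm d G2, real_inner_comm d G3, real_inner_comm d G4]; ring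
  have nv : ‖G3 - G4‖^2 = ⟪G3, G3⟫ - 2*⟪G3, G4⟫ + ⟪G4, G4⟫ := by
    rw [← real_inner_self_eq_norm_sq]; simp only [smul_neg, neg_neg, sub_neg_eq_add, smul_smul, inner_add_left, inner_add_right, inner_sub_left, inner_sub_right, inner_neg_left, inner_neg_right, real_inner_smul_left, real_inner_smul_right, real_inner_comm G2 G1, real_inner_comm G3 G1, real_inner_comm G3 G2, real_inner_comm G4 G1, real_inner_comm G4 G2, real_inner_comm G4 G3, real_inner_comm d G1, real_inner_comm d G2, real_inner_comm d G3, real_inner_comm d G4]; ring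
  have main := key_scalar μ L α ⟪G1, G1⟫ ⟪G1, G2⟫ ⟪G2, G2⟫ ⟪G2, G3⟫ ⟪G2, G4⟫ ⟪G3, G3⟫ ⟪G3, G4⟫ ⟪G4, G4⟫ ⟪G1, d⟫ ⟪G2, d⟫ ⟪G3, d⟫ ⟪G4, d⟫ ⟪d, d⟫ (f₁ X) (f₁ Y) (f₁ P) (f₂ X) (f₂ P) hμ hμL hα0 hα1 hα2 hE1 hE2 hE3 hE4 hE5 hq1 hq2 hq3
  rw [nu, nv]
  linarith

/-- Aggregated (inductive) inequality for the boosted DCA. -/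
theorem boosted_dca_aggregated
    (n : ℕ) (hn : 0 < n)
    (μ L : ℝ) (hμ : 0 ≤ μ) (hμL : μ < L)
    (α : ℝ) (hα0 : 0 < α) (hα1 : α ≤ min 1 (2 * μ / L))
    (f₁ f₂ : EuclideanSpace ℝ (Fin n) → ℝ)
    (hf₁ : MemFClass μ L f₁) (hf₂ : MemFClass μ L f₂)
    (f : EuclideanSpace ℝ (Fin n) → ℝ) (hf : ∀ u, f u = f₁ u - f₂ u)
    (x y g1 g2 : ℕ → EuclideanSpace ℝ (Fin n))
    (hg1 : ∀ k ≥ 1, SubgradAt f₁ (g1 k) (x k))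
    (hg2 : ∀ k ≥ 1, SubgradAt f₂ (g2 k) (x k))
    (hy : ∀ k ≥ 1, SubgradAt f₁ (g2 k) (y k))
    (hstep : ∀ k ≥ 1, x (k + 1) = y k + α • (y k - x k)) :
    ∀ k ≥ 2,
      f (x k) + (1 / L) * (1 / 2 + α * μ / L) * ‖g1 1 - g2 1‖ ^ 2
        + ∑ i ∈ Finset.Icc 2 (k - 1), (1 / L) * (1 + α * μ / L) * ‖g1 i - g2 i‖ ^ 2
        + (1 / (2 * L)) * ‖g1 k - g2 k‖ ^ 2
      ≤ f (x 1) := by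
  have hL0 : (0:ℝ) < L := by linarith
  have hαle : α ≤ 2 * μ / L := le_trans hα1 (min_le_right _ _)
  have hα2 : α * L ≤ 2 * μ := (le_div_iff₀ hL0).mp hαle
  have hμ0 : 0 < μ := by nlinarith
  have hαle1 : α ≤ 1 := le_trans hα1 (min_le_left _ _)
  -- the one-step inequality, in the coefficients of the statement
  have stepk : ∀ j : ℕ, 1 ≤ j →
      f (x (j+1)) + (1 / L) * (1 / 2 + α * μ / L) * ‖g1 j - g2 j‖ ^ 2
        + (1 / (2 * L)) * ‖g1 (j+1) - g2 (j+1)‖ ^ 2 ≤ f (x j) := by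
    intro j hj
    have hj1 : 1 ≤ j + 1 := by omega
    have h := step hμ0 hμL hα0 hαle1 hα2 hf₁ hf₂ (hg1 j hj) (hg2 j hj) (hy j hj)
      (hg1 (j+1) hj1) (hg2 (j+1) hj1) (hstep j hj)
    have hco : (1:ℝ)/(2*L) + α*μ/L^2 = (1 / L) * (1 / 2 + α * μ / L) := by
      field_simp
    rw [hf (x (j+1)), hf (x j)]
    rw [hco] at h
    linarith
  intro k hk
  induction k, hk using Nat.le_induction with
  | base =>
      have h := stepk 1 le_rfl
      have : Finset.Icc 2 (2 - 1) = (∅ : Finset ℕ) := by decide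
      rw [this, Finset.sum_empty]
      norm_num at h ⊢
      linarith
  | succ k hk ih =>
      have h := stepk k (by omega)
      have hsum : ∑ i ∈ Finset.Icc 2 (k + 1 - 1), (1 / L) * (1 + α * μ / L) * ‖g1 i - g2 i‖ ^ 2
          = (∑ i ∈ Finset.Icc 2 (k - 1), (1 / L) * (1 + α * μ / L) * ‖g1 i - g2 i‖ ^ 2)
            + (1 / L) * (1 + α * μ / L) * ‖g1 k - g2 k‖ ^ 2 := by
        have h1 : k + 1 - 1 = (k - 1) + 1 := by omega
        have hk1 : k - 1 + 1 = k := by omega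
        rw [h1, Finset.sum_Icc_succ_top (by omega : 2 ≤ (k - 1) + 1), hk1]
      rw [hsum]
      have hco2 : (1 / L) * (1 + α * μ / L) = (1 / L) * (1 / 2 + α * μ / L) + 1 / (2 * L) := by
        field_simp
        ring
      have hterm : (1 / L) * (1 + α * μ / L) * ‖g1 k - g2 k‖ ^ 2
          = (1 / L) * (1 / 2 + α * μ / L) * ‖g1 k - g2 k‖ ^ 2
            + 1 / (2 * L) * ‖g1 k - g2 k‖ ^ 2 := by rw [hco2]; ring
      linarith
end
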